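/- arXiv:1910.03038 — 11 statements merged into one kernel-verified Lean document; each statement's English description precedes it below -/
import Mathlib

section
/- Let H be the complete k-partite k-uniform hypergraph with parts of sizes n₁,...,n_k. If every nᵢ ≥ 3, then the infectious power domination number of H equals 2. -/
open Set

/-- `b` shares an edge with `a`. -/
def Nbr {V : Type*} (E : Set (Set V)) (a b : V) : Prop := ∃ e ∈ E, a ∈ e ∧ b ∈ e

/-- Closed neighborhood of `a`: `a` together with all its neighbors. -/
def ClosedNbhd {V : Type*} (E : Set (Set V)) (a : V) : Set V := {b | b = a ∨ Nbr E a b}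

/-- Connectivity: any two vertices are joined by a path. -/
def Conn {V : Type*} (E : Set (Set V)) : Prop := ∀ a b : V, Relation.ReflTransGen (Nbr E) a b

/-- One infection step: a nonempty set `A` of infected vertices infects an edge `e`
if `A ⊆ e` and every uninfected `w` with `A ∪ {w}` inside some edge lies in `e`. -/
def InfStep {V : Type*} (E : Set (Set V)) (S T : Set V) : Prop :=
  ∃ A e, A.Nonempty ∧ A ⊆ S ∧ e ∈ E ∧ A ⊆ e ∧
    (∀ w ∉ S, (∃ f ∈ E, insert w A ⊆ f) → w ∈ e) ∧ T = S ∪ e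

/-- One observation step of 1-power domination: an observed vertex `v` observes an incident
edge `e` containing all its unobserved neighbors. -/
def ObsStep {V : Type*} (E : Set (Set V)) (S T : Set V) : Prop :=
  ∃ v ∈ S, ∃ e ∈ E, v ∈ e ∧ (∀ w ∉ S, Nbr E v w → w ∈ e) ∧ T = S ∪ e

/-- Domination step: the set observed after the initial domination step. -/
def DomClosure {V : Type*} (E : Set (Set V)) (S₀ : Set V) : Set V := ⋃ v ∈ S₀, ClosedNbhd E v

/-- `S₀` is an infectious power dominating set. -/
def IsIPDS {V : Type*} (E : Set (Set V)) (S₀ : Set V) : Prop :=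
  Relation.ReflTransGen (InfStep E) (DomClosure E S₀) Set.univ

/-- `S₀` is a (1-)power dominating set. -/
def IsPDS {V : Type*} (E : Set (Set V)) (S₀ : Set V) : Prop :=
  Relation.ReflTransGen (ObsStep E) (DomClosure E S₀) Set.univ

/-- `S₀` is an infection set (no domination step). -/
def IsInfectionSet {V : Type*} (E : Set (Set V)) (S₀ : Set V) : Prop :=
  Relation.ReflTransGen (InfStep E) S₀ Set.univ

/-- `D` is a dominating set. -/
def IsDomSet {V : Type*} (E : Set (Set V)) (D : Set V) : Prop :=
  ∀ v : V, ∃ d ∈ D, v ∈ ClosedNbhd E d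

/-- The infectious power domination number `γ_PI`. -/
noncomputable def gammaPI {V : Type*} (E : Set (Set V)) : ℕ :=
  sInf {n | ∃ S₀ : Set V, S₀.ncard = n ∧ IsIPDS E S₀}

/-- The power domination number `γ_P`. -/
noncomputable def gammaP {V : Type*} (E : Set (Set V)) : ℕ :=
  sInf {n | ∃ S₀ : Set V, S₀.ncard = n ∧ IsPDS E S₀}

/-- The infection number `I`. -/
noncomputable def infectionNumber {V : Type*} (E : Set (Set V)) : ℕ :=
  sInf {n | ∃ S₀ : Set V, S₀.ncard = n ∧ IsInfectionSet E S₀}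

/-- The domination number `γ`. -/
noncomputable def gammaDom {V : Type*} (E : Set (Set V)) : ℕ :=
  sInf {n | ∃ D : Set V, D.ncard = n ∧ IsDomSet E D}

/-- Degree of a vertex: number of edges containing it. -/
noncomputable def degree {V : Type*} (E : Set (Set V)) (v : V) : ℕ := {e ∈ E | v ∈ e}.ncard

/-- Edge set of the complete `k`-partite `k`-uniform hypergraph with parts `Fin (n i)`:
edges are the sets with exactly one vertex from each part. -/
def kPartiteEdges (k : ℕ) (n : Fin k → ℕ) : Set (Set ((i : Fin k) × Fin (n i))) :=
  {e | ∃ f : (i : Fin k) → Fin (n i),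
    e = Set.range fun i => (⟨i, f i⟩ : (i : Fin k) × Fin (n i))}

namespace StmtAux

variable {k : ℕ} {n : Fin k → ℕ}

abbrev Vt (k : ℕ) (n : Fin k → ℕ) := (i : Fin k) × Fin (n i)

lemma mem_range_edge (f : ∀ i, Fin (n i)) (v : Vt k n) :
    v ∈ Set.range (fun j => (⟨j, f j⟩ : Vt k n)) ↔ f v.1 = v.2 := by
  obtain ⟨i, x⟩ := v
  constructor
  · rintro ⟨j, hj⟩
    obtain ⟨h1, h2⟩ := Sigma.mk.inj_iff.mp hj
    subst h1
    exact eq_of_heq h2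
  · intro h
    exact ⟨i, congrArg (fun z => (⟨i, z⟩ : Vt k n)) h⟩

lemma nbr_of_ne_fst (hn : ∀ i, 1 ≤ n i) {a b : Vt k n} (h : a.1 ≠ b.1) :
    Nbr (kPartiteEdges k n) a b := by
  set f0 : ∀ i, Fin (n i) := fun i => ⟨0, hn i⟩ with hf0
  set f := Function.update (Function.update f0 a.1 a.2) b.1 b.2 with hf
  refine ⟨Set.range (fun j => (⟨j, f j⟩ : Vt k n)), ⟨f, rfl⟩, ?_, ?_⟩
  · rw [mem_range_edge]
    rw [hf, Function.update_of_ne h, Function.update_self]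
  · rw [mem_range_edge, hf, Function.update_self]

lemma eq_of_nbr_fst_eq {a b : Vt k n} (hab : Nbr (kPartiteEdges k n) a b)
    (h : a.1 = b.1) : a = b := by
  obtain ⟨e, ⟨f, rfl⟩, ha, hb⟩ := hab
  obtain ⟨i, x⟩ := a
  obtain ⟨j, y⟩ := b
  rw [mem_range_edge] at ha hb
  simp only at h
  subst h
  simp only at ha hb
  rw [← ha, ← hb]

lemma no_step_from_empty {V : Type*} (E : Set (Set V)) {T : Set V}
    (h : Relation.ReflTransGen (InfStep E) ∅ T) : T = ∅ := by
  induction h with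
  | refl => rfl
  | tail _ step ih =>
    rw [ih] at step
    obtain ⟨A, e, hA, hAS, _⟩ := step
    exact absurd (hAS hA.some_mem) (by simp)

/-- The invariant for the single-vertex case. -/
def Pinv (v : Vt k n) (S : Set (Vt k n)) : Prop :=
  (∀ u : Vt k n, u ∉ S → u.1 = v.1) ∧
  ∃ x y : Fin (n v.1), x ≠ y ∧ (⟨v.1, x⟩ : Vt k n) ∉ S ∧ (⟨v.1, y⟩ : Vt k n) ∉ S

lemma inv_step (v : Vt k n) {S T : Set (Vt k n)}
    (hP : Pinv v S) (hstep : InfStep (kPartiteEdges k n) S T) : Pinv v T := by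
  obtain ⟨A, e, hA, hAS, ⟨f, rfl⟩, hAe, hall, rfl⟩ := hstep
  obtain ⟨hpart, x, y, hxy, hx, hy⟩ := hP
  by_cases hc : ∃ a ∈ A, a.1 = v.1
  · obtain ⟨a, haA, ha1⟩ := hc
    obtain ⟨a1, a2⟩ := a
    simp only at ha1
    subst ha1
    have hfa : f v.1 = a2 := (mem_range_edge f ⟨v.1, a2⟩).mp (hAe haA)
    have key : ∀ z : Fin (n v.1),
        (⟨v.1, z⟩ : Vt k n) ∈ Set.range (fun j => (⟨j, f j⟩ : Vt k n)) →
        (⟨v.1, z⟩ : Vt k n) ∈ S := by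
      intro z hz
      rw [mem_range_edge] at hz
      simp only at hz
      rw [← hz, hfa]
      exact hAS haA
    refine ⟨fun u hu => hpart u (fun h => hu (Set.mem_union_left _ h)), x, y, hxy, ?_, ?_⟩
    · intro h
      rcases h with h | h
      · exact hx h
      · exact hx (key x h)
    · intro h
      rcases h with h | h
      · exact hy h
      · exact hy (key y h)
  · push_neg at hc
    exfalso
    have hext : ∀ z : Fin (n v.1), (⟨v.1, z⟩ : Vt k n) ∉ S →
        (⟨v.1, z⟩ : Vt k n) ∈ Set.range (fun j => (⟨j, f j⟩ : Vt k n)) := by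
      intro z hz
      apply hall _ hz
      refine ⟨Set.range (fun j =>
        (⟨j, Function.update f v.1 z j⟩ : Vt k n)), ⟨_, rfl⟩, ?_⟩
      intro u hu
      rcases Set.mem_insert_iff.mp hu with rfl | hu
      · rw [mem_range_edge]
        simp [Function.update_self]
      · rw [mem_range_edge, Function.update_of_ne (hc u hu)]
        exact (mem_range_edge f u).mp (hAe hu)
    have h1 : f v.1 = x := (mem_range_edge f _).mp (hext x hx)
    have h2 : f v.1 = y := (mem_range_edge f _).mp (hext y hy)
    exact hxy (h1 ▸ h2)

lemma inv_init (hn : ∀ i, 3 ≤ n i) (v : Vt k n) :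
    Pinv v (DomClosure (kPartiteEdges k n) {v}) := by
  have hdc : DomClosure (kPartiteEdges k n) {v} = ClosedNbhd (kPartiteEdges k n) v := by
    simp [DomClosure]
  rw [hdc]
  constructor
  · intro u hu
    by_contra hne
    exact hu (Or.inr (nbr_of_ne_fst (fun i => by have := hn i; omega) (fun h => hne h.symm)))
  · have hcard : 1 < ({v.2}ᶜ : Finset (Fin (n v.1))).card := by
      rw [Finset.card_compl, Finset.card_singleton, Fintype.card_fin]
      have := hn v.1
      omega
    obtain ⟨x, hxm, y, hym, hxy⟩ := Finset.one_lt_card.mp hcard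
    have hxv : x ≠ v.2 := by simpa using hxm
    have hyv : y ≠ v.2 := by simpa using hym
    have key : ∀ z : Fin (n v.1), z ≠ v.2 →
        (⟨v.1, z⟩ : Vt k n) ∉ ClosedNbhd (kPartiteEdges k n) v := by
      intro z hz h
      rcases h with h | h
      · apply hz
        rw [Sigma.mk.inj_iff] at h
        exact eq_of_heq h.2
      · have := eq_of_nbr_fst_eq h rfl
        apply hz
        rw [Sigma.mk.inj_iff] at this
        exact (eq_of_heq this.2).symm
    exact ⟨x, y, hxy, key x hxv, key y hyv⟩

lemma ipds_ncard_ge_two (hk : 2 ≤ k) (hn : ∀ i, 3 ≤ n i) (S₀ : Set (Vt k n))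
    (h : IsIPDS (kPartiteEdges k n) S₀) : 2 ≤ S₀.ncard := by
  by_contra hlt
  push_neg at hlt
  interval_cases hcard : S₀.ncard
  · -- ncard = 0
    have hS : S₀ = ∅ := (Set.ncard_eq_zero (Set.toFinite _)).mp hcard
    rw [hS] at h
    unfold IsIPDS at h
    have hdc : DomClosure (kPartiteEdges k n) (∅ : Set (Vt k n)) = ∅ := by
      simp [DomClosure]
    rw [hdc] at h
    have := no_step_from_empty _ h
    have hne : (Set.univ : Set (Vt k n)).Nonempty :=
      ⟨⟨⟨0, by omega⟩, ⟨0, by have := hn ⟨0, by omega⟩; omega⟩⟩, trivial⟩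
    rw [this] at hne
    exact Set.not_nonempty_empty hne
  · -- ncard = 1
    obtain ⟨v, rfl⟩ := Set.ncard_eq_one.mp hcard
    have hfin : ∀ T, Relation.ReflTransGen (InfStep (kPartiteEdges k n))
        (DomClosure (kPartiteEdges k n) {v}) T → Pinv v T := by
      intro T hT
      induction hT with
      | refl => exact inv_init hn v
      | tail _ step ih => exact inv_step v ih step
    obtain ⟨_, x, _, _, hx, _⟩ := hfin _ h
    exact hx trivial

end StmtAux

theorem stmt3 (k : ℕ) (hk : 2 ≤ k) (n : Fin k → ℕ) (hn : ∀ i, 3 ≤ n i) :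
    gammaPI (kPartiteEdges k n) = 2 := by
  have h1 : 1 ≤ n ⟨1, by omega⟩ := by have := hn ⟨1, by omega⟩; omega
  set a : StmtAux.Vt k n := ⟨⟨0, by omega⟩, ⟨0, by have := hn ⟨0, by omega⟩; omega⟩⟩ with ha
  set b : StmtAux.Vt k n := ⟨⟨1, by omega⟩, ⟨0, h1⟩⟩ with hb
  have hab : a ≠ b := by
    intro h
    have := congrArg Sigma.fst h
    simp [ha, hb, Fin.ext_iff] at this
  have hdc : DomClosure (kPartiteEdges k n) {a, b} = Set.univ := by
    ext w
    simp only [DomClosure, Set.mem_iUnion, Set.mem_univ, iff_true]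
    by_cases hw : w.1 = a.1
    · refine ⟨b, by simp, Or.inr ?_⟩
      apply StmtAux.nbr_of_ne_fst (fun i => by have := hn i; omega)
      rw [hw, ha, hb]
      simp [Fin.ext_iff]
    · exact ⟨a, by simp, Or.inr (StmtAux.nbr_of_ne_fst
        (fun i => by have := hn i; omega) (fun h => hw h.symm))⟩
  have mem2 : 2 ∈ {m | ∃ S₀ : Set (StmtAux.Vt k n), S₀.ncard = m ∧
      IsIPDS (kPartiteEdges k n) S₀} := by
    refine ⟨{a, b}, Set.ncard_pair hab, ?_⟩
    unfold IsIPDS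
    rw [hdc]
  unfold gammaPI
  refine le_antisymm (Nat.sInf_le mem2) (le_csInf ⟨2, mem2⟩ ?_)
  rintro m ⟨S₀, rfl, hS⟩
  exact StmtAux.ipds_ncard_ge_two hk hn S₀ hS
end

section
/- Let H be the complete k-partite k-uniform hypergraph with parts of sizes n₁,...,n_k. If some part has size at most 2, then the infectious power domination number of H equals 1. -/
open Set

lemma mem_kEdge {k : ℕ} {n : Fin k → ℕ} (f : (i : Fin k) → Fin (n i))
    (x : (i : Fin k) × Fin (n i)) :
    x ∈ Set.range (fun i => (⟨i, f i⟩ : (i : Fin k) × Fin (n i))) ↔ f x.1 = x.2 := by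
  constructor
  · rintro ⟨i, rfl⟩; rfl
  · obtain ⟨a, b⟩ := x
    intro h
    exact ⟨a, by simp only; rw [h]⟩

theorem stmt4 (k : ℕ) (hk : 2 ≤ k) (n : Fin k → ℕ) (hn : ∀ i, 1 ≤ n i)
    (hsmall : ∃ i, n i ≤ 2) :
    gammaPI (kPartiteEdges k n) = 1 := by
  classical
  obtain ⟨i₀, hi₀⟩ := hsmall
  set E := kPartiteEdges k n with hE
  have hnz : ∀ j, 0 < n j := hn
  set f₀ : (j : Fin k) → Fin (n j) := fun j => ⟨0, hnz j⟩ with hf₀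
  set v : (i : Fin k) × Fin (n i) := ⟨i₀, f₀ i₀⟩ with hv
  -- any vertex outside part i₀ is a neighbor of v
  have hNbr : ∀ b : (i : Fin k) × Fin (n i), b.1 ≠ i₀ → Nbr E v b := by
    intro b hb
    refine ⟨Set.range (fun j => (⟨j, Function.update f₀ b.1 b.2 j⟩ :
      (i : Fin k) × Fin (n i))), ⟨_, rfl⟩, ?_, ?_⟩
    · rw [mem_kEdge]
      show Function.update f₀ b.1 b.2 i₀ = f₀ i₀
      rw [Function.update_of_ne (Ne.symm hb)]
    · rw [mem_kEdge]
      exact Function.update_self _ _ _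
  have hipds : IsIPDS E {v} := by
    have hdom : DomClosure E {v} = ClosedNbhd E v := by
      simp [DomClosure]
    rcases Nat.lt_or_ge (n i₀) 2 with h1 | h2
    · -- n i₀ = 1 : the single vertex dominates everything
      have huniv : DomClosure E {v} = Set.univ := by
        rw [hdom]
        ext b
        simp only [Set.mem_univ, iff_true, ClosedNbhd, Set.mem_setOf_eq]
        by_cases hb : b.1 = i₀
        · left
          obtain ⟨a, c⟩ := b
          simp only at hb
          subst hb
          have hc : (c : ℕ) = 0 := by omega
          rw [hv]
          congr 1
          exact Fin.ext hc
        · exact Or.inr (hNbr b hb)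
      rw [IsIPDS, huniv]
    · have hni : n i₀ = 2 := le_antisymm hi₀ h2
      set w : (i : Fin k) × Fin (n i) := ⟨i₀, ⟨1, by omega⟩⟩ with hw
      have hvw : v ≠ w := by
        intro h
        have := congrArg (fun x => ((x.2 : Fin (n x.1)) : ℕ)) h
        simp [hv, hw] at this
      have hS : DomClosure E {v} = {w}ᶜ := by
        rw [hdom]
        ext b
        simp only [ClosedNbhd, Set.mem_setOf_eq, Set.mem_compl_iff,
          Set.mem_singleton_iff]
        constructor
        · rintro (rfl | ⟨e, ⟨f, rfl⟩, hve, hbe⟩)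
          · exact hvw
          · rw [mem_kEdge] at hve hbe
            rintro rfl
            rw [hv] at hve
            simp only at hve hbe
            rw [hve] at hbe
            have := congrArg Fin.val hbe
            simp [hf₀, hw] at this
        · intro hb
          by_cases hb1 : b.1 = i₀
          · left
            obtain ⟨a, c⟩ := b
            simp only at hb1
            subst hb1
            have hc : (c : ℕ) < 2 := by omega
            have hc0 : (c : ℕ) = 0 := by
              rcases (by omega : (c:ℕ) = 0 ∨ (c:ℕ) = 1) with h | h
              · exact h
              · exfalso; exact hb (by rw [hw]; congr 1; exact Fin.ext h)
            rw [hv]; congr 1; exact Fin.ext hc0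
          · exact Or.inr (hNbr b hb1)
      rw [IsIPDS, hS]
      -- one infection step using the edge through w
      set e : Set ((i : Fin k) × Fin (n i)) :=
        Set.range (fun j => (⟨j, Function.update f₀ i₀ w.2 j⟩ :
          (i : Fin k) × Fin (n i))) with he
      have hwe : w ∈ e := by
        rw [he, mem_kEdge]; exact Function.update_self _ _ _
      refine Relation.ReflTransGen.single ⟨e \ {w}, e, ?_, ?_, ⟨_, rfl⟩, ?_, ?_, ?_⟩
      · -- nonempty
        have hi1 : ∃ j : Fin k, j ≠ i₀ := by
          by_contra hcon
          push_neg at hcon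
          have h0 : (⟨0, by omega⟩ : Fin k) = i₀ := hcon _
          have h1 : (⟨1, by omega⟩ : Fin k) = i₀ := hcon _
          rw [← h1] at h0
          exact absurd (congrArg Fin.val h0) (by simp)
        obtain ⟨j, hj⟩ := hi1
        refine ⟨⟨j, Function.update f₀ i₀ w.2 j⟩, ⟨j, rfl⟩, ?_⟩
        simp only [Set.mem_singleton_iff]
        intro h
        exact hj (congrArg Sigma.fst h)
      · intro x hx
        exact hx.2
      · exact Set.diff_subset
      · intro x hx _
        simp only [Set.mem_compl_iff, Set.mem_singleton_iff, not_not] at hx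
        rw [hx]; exact hwe
      · ext x
        simp only [Set.mem_univ, true_iff, Set.mem_union, Set.mem_compl_iff,
          Set.mem_singleton_iff]
        by_cases hx : x = w
        · exact Or.inr (hx ▸ hwe)
        · exact Or.inl hx
  have h1mem : 1 ∈ {m | ∃ S₀ : Set ((i : Fin k) × Fin (n i)),
      S₀.ncard = m ∧ IsIPDS E S₀} := ⟨{v}, Set.ncard_singleton v, hipds⟩
  have h0not : 0 ∉ {m | ∃ S₀ : Set ((i : Fin k) × Fin (n i)),
      S₀.ncard = m ∧ IsIPDS E S₀} := by
    rintro ⟨S₀, hc, hSipds⟩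
    have hS₀ : S₀ = ∅ := (Set.ncard_eq_zero (Set.toFinite S₀)).mp hc
    have hdc : DomClosure E S₀ = ∅ := by
      rw [hS₀]; simp [DomClosure]
    rw [IsIPDS, hdc] at hSipds
    rcases hSipds.cases_head with heq | ⟨T, hstep, _⟩
    · exact absurd (heq ▸ Set.mem_univ v) (Set.notMem_empty v)
    · obtain ⟨A, e', hA, hAS, _⟩ := hstep
      exact absurd (hAS hA.choose_spec) (Set.notMem_empty _)
  refine le_antisymm (Nat.sInf_le h1mem) ?_
  rw [Nat.one_le_iff_ne_zero]
  intro h0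
  rcases Nat.sInf_eq_zero.mp h0 with h | h
  · exact h0not h
  · rw [h] at h1mem; exact h1mem
end

section
/- Let H be a connected hypergraph in which at least one vertex has degree at least 3. Then the power domination number of H is at most the number of vertices of degree at least 3. -/
open Set

section Aux
variable {V : Type*} [Fintype V]

/-- A vertex of degree ≤ 2 containing an edge `g` has at most one other edge. -/
lemma two_edges (E : Set (Set V)) (x : V) (hdeg : ¬ 3 ≤ degree E x)
    (g : Set V) (hg : g ∈ E) (hxg : x ∈ g) :
    ∃ e ∈ E, x ∈ e ∧ ∀ f ∈ E, x ∈ f → f = g ∨ f = e := by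
  by_cases h : ∃ f, f ∈ E ∧ x ∈ f ∧ f ≠ g
  · obtain ⟨e, he, hxe, hne⟩ := h
    refine ⟨e, he, hxe, ?_⟩
    intro f hf hxf
    by_contra hc
    push_neg at hc
    apply hdeg
    have hsub : ({g, e, f} : Set (Set V)) ⊆ {e' | e' ∈ E ∧ x ∈ e'} := by
      intro t ht
      rcases ht with rfl | rfl | rfl
      · exact ⟨hg, hxg⟩
      · exact ⟨he, hxe⟩
      · exact ⟨hf, hxf⟩
    have h3' : ({g, e, f} : Set (Set V)).ncard = 3 :=
      Set.ncard_eq_three.mpr ⟨g, e, f, fun h => hne h.symm, fun h => hc.1 h.symm,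
        fun h => hc.2 h.symm, rfl⟩
    calc 3 = ({g, e, f} : Set (Set V)).ncard := h3'.symm
      _ ≤ _ := Set.ncard_le_ncard hsub (Set.toFinite _)
  · push_neg at h
    refine ⟨g, hg, hxg, fun f hf hxf => Or.inl ?_⟩
    by_contra hne
    exact hne (h f hf hxf)

def Good (E : Set (Set V)) (S : Set V) : Prop :=
  ∀ x ∈ S, ∃ e ∈ E, x ∈ e ∧ ∀ w ∉ S, Nbr E x w → w ∈ e

lemma deg3_edge (E : Set (Set V)) (x : V) (hx : 3 ≤ degree E x) :
    ∃ e ∈ E, x ∈ e := by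
  have : ({e | e ∈ E ∧ x ∈ e}).Nonempty := by
    apply Set.nonempty_of_ncard_ne_zero
    unfold degree at hx
    omega
  obtain ⟨e, he, hxe⟩ := this
  exact ⟨e, he, hxe⟩

lemma closed_sub (E : Set (Set V)) {x : V} (hx : 3 ≤ degree E x) :
    ClosedNbhd E x ⊆ DomClosure E {v : V | 3 ≤ degree E v} := by
  intro w hw
  exact Set.mem_biUnion hx hw

lemma good_dom (E : Set (Set V)) :
    Good E (DomClosure E {v : V | 3 ≤ degree E v}) := by
  set D := DomClosure E {v : V | 3 ≤ degree E v} with hD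
  intro x hx
  obtain ⟨v, hv, hxv⟩ : ∃ v, 3 ≤ degree E v ∧ x ∈ ClosedNbhd E v := by
    simpa [DomClosure, hD] using hx
  by_cases hdeg : 3 ≤ degree E x
  · obtain ⟨e, he, hxe⟩ := deg3_edge E x hdeg
    refine ⟨e, he, hxe, fun w hw hn => absurd ?_ hw⟩
    exact closed_sub E hdeg (Or.inr hn)
  · rcases hxv with rfl | ⟨g, hg, hvg, hxg⟩
    · exact absurd hv hdeg
    · obtain ⟨f, hf, hxf, hff⟩ := two_edges E x hdeg g hg hxg
      refine ⟨f, hf, hxf, ?_⟩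
      rintro w hw ⟨g', hg', hxg', hwg'⟩
      rcases hff g' hg' hxg' with rfl | rfl
      · exact absurd (closed_sub E hv (Or.inr ⟨g', hg', hvg, hwg'⟩)) hw
      · exact hwg'

lemma good_union (E : Set (Set V)) {S e : Set V}
    (hDS : DomClosure E {v : V | 3 ≤ degree E v} ⊆ S)
    (hGood : Good E S) (he : e ∈ E) : Good E (S ∪ e) := by
  intro x hx
  rcases hx with hxS | hxe
  · obtain ⟨f, hf, hxf, hcov⟩ := hGood x hxS
    exact ⟨f, hf, hxf, fun w hw hn => hcov w (fun h => hw (Or.inl h)) hn⟩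
  · by_cases hdeg : 3 ≤ degree E x
    · refine ⟨e, he, hxe, fun w hw hn => absurd ?_ hw⟩
      exact Or.inl (hDS (closed_sub E hdeg (Or.inr hn)))
    · obtain ⟨f, hf, hxf, hff⟩ := two_edges E x hdeg e he hxe
      refine ⟨f, hf, hxf, ?_⟩
      rintro w hw ⟨g, hg, hxg, hwg⟩
      rcases hff g hg hxg with rfl | rfl
      · exact absurd (Or.inr hwg) hw
      · exact hwg

lemma cross {r : V → V → Prop} {S : Set V} {a b : V}
    (h : Relation.ReflTransGen r a b) (ha : a ∈ S) (hb : b ∉ S) :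
    ∃ x ∈ S, ∃ y, y ∉ S ∧ r x y := by
  induction h with
  | refl => exact absurd ha hb
  | @tail m c hab hbc ih =>
    by_cases hm : m ∈ S
    · exact ⟨m, hm, c, hb, hbc⟩
    · exact ih hm

lemma reach_univ (E : Set (Set V)) (hconn : Conn E) {v₀ : V} (hv₀ : 3 ≤ degree E v₀) :
    ∀ n : ℕ, ∀ S : Set V, Sᶜ.ncard ≤ n →
      DomClosure E {v : V | 3 ≤ degree E v} ⊆ S → Good E S →
      Relation.ReflTransGen (ObsStep E) S Set.univ := by
  intro n
  induction n with
  | zero =>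
    intro S hS _ _
    have : Sᶜ = ∅ := by
      have := Set.ncard_eq_zero (Set.toFinite Sᶜ) |>.mp (Nat.le_zero.mp hS)
      exact this
    have : S = Set.univ := by
      rw [← Set.compl_empty, ← this, compl_compl]
    rw [this]
  | succ n ih =>
    intro S hS hDS hGood
    by_cases huniv : S = Set.univ
    · rw [huniv]
    · obtain ⟨u, hu⟩ : ∃ u, u ∉ S := by
        by_contra hc
        push_neg at hc
        exact huniv (Set.eq_univ_of_forall hc)
      have hv₀S : v₀ ∈ S := hDS (closed_sub E hv₀ (Or.inl rfl))
      obtain ⟨x, hx, y, hy, hxy⟩ := cross (hconn v₀ u) hv₀S hu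
      obtain ⟨e, he, hxe, hcov⟩ := hGood x hx
      have hye : y ∈ e := hcov y hy hxy
      have hstep : ObsStep E S (S ∪ e) := ⟨x, hx, e, he, hxe, hcov, rfl⟩
      have hlt : (S ∪ e)ᶜ.ncard < Sᶜ.ncard := by
        apply Set.ncard_lt_ncard _ (Set.toFinite _)
        constructor
        · intro z hz
          simp only [Set.mem_compl_iff, Set.mem_union] at hz ⊢
          exact fun h => hz (Or.inl h)
        · intro hsub
          exact (hsub hy) (Or.inr hye)
      refine Relation.ReflTransGen.head hstep (ih (S ∪ e) (by omega) ?_ ?_)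
      · exact hDS.trans Set.subset_union_left
      · exact good_union E hDS hGood he

end Aux

theorem stmt7 {V : Type*} [Fintype V] (E : Set (Set V))
    (hred : ∀ e ∈ E, ∀ f ∈ E, e ⊆ f → e = f)
    (hconn : Conn E) (h3 : ∃ v : V, 3 ≤ degree E v) :
    gammaP E ≤ {v : V | 3 ≤ degree E v}.ncard :=  by
  have hpds : IsPDS E {v : V | 3 ≤ degree E v} := by
    obtain ⟨v₀, hv₀⟩ := h3
    exact reach_univ E hconn hv₀ (DomClosure E {v : V | 3 ≤ degree E v})ᶜ.ncard _
      le_rfl subset_rfl (good_dom E)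
  exact Nat.sInf_le ⟨{v : V | 3 ≤ degree E v}, rfl, hpds⟩
end

section
/- For any connected hypergraph H with at least two edges, the power domination number of H is at most |E(H)| − 1. -/
open Set

theorem stmt9 {V : Type*} [Fintype V] (E : Set (Set V))
    (hred : ∀ e ∈ E, ∀ f ∈ E, e ⊆ f → e = f)
    (hconn : Conn E) (hE : 2 ≤ E.ncard) :
    gammaP E ≤ E.ncard - 1 := by
  classical
  have hEfin : E.Finite := Set.toFinite E
  obtain ⟨e₀, he₀⟩ : E.Nonempty := by
    rcases Set.eq_empty_or_nonempty E with h | h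
    · simp [h] at hE
    · exact h
  -- every edge is nonempty
  have hedgene : ∀ f ∈ E, f.Nonempty := by
    intro f hf
    rcases Set.eq_empty_or_nonempty f with h | h
    · exfalso
      obtain ⟨a, b, ha, hb, hab⟩ := (Set.one_lt_ncard_iff hEfin).mp (by omega)
      rcases eq_or_ne f a with rfl | hfa
      · exact hab ((hred f hf b hb (by simp [h])).symm ▸ (hred f hf b hb (by simp [h])))
      · exact hfa (hred f hf a ha (by simp [h]))
    · exact h
  -- every vertex lies in some edge
  have hcov : ∀ v : V, ∃ f ∈ E, v ∈ f := by
    intro v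
    by_contra h
    push_neg at h
    obtain ⟨w, hw⟩ := hedgene e₀ he₀
    rcases (hconn v w).cases_head with heq | ⟨x, ⟨g, hg, hvg, _⟩, _⟩
    · exact h e₀ he₀ (heq ▸ hw)
    · exact h g hg hvg
  have hVne : Nonempty V := ⟨(hedgene e₀ he₀).choose⟩
  -- a choice of a vertex in each edge
  let x : Set V → V := fun f => if h : f.Nonempty then h.choose else Classical.arbitrary V
  have hx : ∀ f ∈ E, x f ∈ f := by
    intro f hf
    have h := hedgene f hf
    simp only [x, dif_pos h]
    exact h.choose_spec
  set S₀ : Set V := x '' (E \ {e₀}) with hS₀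
  -- everything outside e₀ (in an edge ≠ e₀) is dominated
  have hDC : ∀ w : V, ∀ f ∈ E, f ≠ e₀ → w ∈ f → w ∈ DomClosure E S₀ := by
    intro w f hf hne hw
    have hxf : x f ∈ S₀ := ⟨f, ⟨hf, hne⟩, rfl⟩
    exact Set.mem_biUnion hxf (Or.inr ⟨f, hf, hx f hf, hw⟩)
  -- e₀ meets some other edge
  obtain ⟨f₁, hf₁E, hf₁ne, v, hv₀, hv₁⟩ :
      ∃ f ∈ E, f ≠ e₀ ∧ ∃ v, v ∈ e₀ ∧ v ∈ f := by
    by_contra h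
    push_neg at h
    obtain ⟨a, ha⟩ := hedgene e₀ he₀
    obtain ⟨c, d, hc, hd, hcd⟩ := (Set.one_lt_ncard_iff hEfin).mp (by omega)
    obtain ⟨f, hfE, hfne⟩ : ∃ f ∈ E, f ≠ e₀ := by
      rcases eq_or_ne c e₀ with rfl | hne
      · exact ⟨d, hd, fun hh => hcd hh.symm⟩
      · exact ⟨c, hc, hne⟩
    obtain ⟨b, hb⟩ := hedgene f hfE
    have key : ∀ u, Relation.ReflTransGen (Nbr E) a u → ∀ g ∈ E, u ∈ g → g = e₀ := by
      intro u hu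
      induction hu with
      | refl =>
        intro g hg hag
        by_contra hne
        exact h g hg hne a ha hag
      | tail _ hstep ih =>
        obtain ⟨g, hg, hcg, hbg⟩ := hstep
        have hge : g = e₀ := ih g hg hcg
        intro g' hg' hb'
        by_contra hne
        exact h g' hg' hne _ (hge ▸ hbg) hb'
    exact hfne (key b (hconn a b) f hfE hb)
  have hvDC : v ∈ DomClosure E S₀ := hDC v f₁ hf₁E hf₁ne hv₁
  -- one observation step finishes
  have hstep : ObsStep E (DomClosure E S₀) Set.univ := by
    refine ⟨v, hvDC, e₀, he₀, hv₀, ?_, ?_⟩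
    · intro w hw _
      obtain ⟨g, hgE, hwg⟩ := hcov w
      rcases eq_or_ne g e₀ with rfl | hne
      · exact hwg
      · exact absurd (hDC w g hgE hne hwg) hw
    · refine (Set.eq_univ_of_forall fun u => ?_).symm
      show u ∈ DomClosure E S₀ ∪ e₀
      obtain ⟨g, hgE, hug⟩ := hcov u
      rcases eq_or_ne g e₀ with rfl | hne
      · exact Or.inr hug
      · exact Or.inl (hDC u g hgE hne hug)
  have hPDS : IsPDS E S₀ := Relation.ReflTransGen.single hstep
  have hmem : S₀.ncard ∈ {n | ∃ S : Set V, S.ncard = n ∧ IsPDS E S} := ⟨S₀, rfl, hPDS⟩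
  calc gammaP E ≤ S₀.ncard := Nat.sInf_le hmem
    _ ≤ (E \ {e₀}).ncard := Set.ncard_image_le hEfin.diff
    _ = E.ncard - 1 := Set.ncard_diff_singleton_of_mem he₀
end

section
/- Any connected hypergraph H with exactly two edges has infectious power domination number equal to 1. -/
open Set

theorem stmt10 {V : Type*} [Fintype V] [Nonempty V] (E : Set (Set V))
    (hred : ∀ e ∈ E, ∀ f ∈ E, e ⊆ f → e = f)
    (hconn : Conn E) (hE : E.ncard = 2) :
    gammaPI E = 1 := by
  obtain ⟨e₁, e₂, hne, rfl⟩ := Set.ncard_eq_two.mp hE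
  have he₁E : e₁ ∈ ({e₁, e₂} : Set (Set V)) := Or.inl rfl
  have he₂E : e₂ ∈ ({e₁, e₂} : Set (Set V)) := Or.inr rfl
  have h1ne : e₁.Nonempty := by
    rw [Set.nonempty_iff_ne_empty]
    intro h
    exact hne (hred _ he₁E _ he₂E (by rw [h]; exact Set.empty_subset _))
  have h2ne : e₂.Nonempty := by
    rw [Set.nonempty_iff_ne_empty]
    intro h
    exact hne (hred _ he₂E _ he₁E (by rw [h]; exact Set.empty_subset _)).symm
  obtain ⟨u, hu⟩ := h1ne
  have hcover : ∀ v : V, v ∈ e₁ ∨ v ∈ e₂ := by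
    intro v
    rcases (hconn v u).cases_head with heq | ⟨w, ⟨g, hgE, hvg, _⟩, _⟩
    · subst heq; left; exact hu
    · rcases hgE with rfl | rfl
      · left; exact hvg
      · right; exact hvg
  have hx : ∃ x, x ∈ e₁ ∧ x ∈ e₂ := by
    by_contra h
    push_neg at h
    obtain ⟨b, hb⟩ := h2ne
    have key : ∀ c, Relation.ReflTransGen (Nbr ({e₁, e₂} : Set (Set V))) u c → c ∈ e₁ := by
      intro c hc
      induction hc with
      | refl => exact hu
      | tail hpath hstep ih =>
        obtain ⟨g, hgE, hcg, hdg⟩ := hstep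
        rcases hgE with rfl | rfl
        · exact hdg
        · exact absurd hcg (h _ ih)
    exact h b (key b (hconn u b)) hb
  obtain ⟨x, hx1, hx2⟩ := hx
  have hdom : DomClosure ({e₁, e₂} : Set (Set V)) {x} = Set.univ := by
    refine Set.eq_univ_of_forall fun v => ?_
    simp only [DomClosure, Set.mem_iUnion, Set.mem_singleton_iff, exists_prop]
    refine ⟨x, rfl, Or.inr ?_⟩
    rcases hcover v with h | h
    · exact ⟨e₁, he₁E, hx1, h⟩
    · exact ⟨e₂, he₂E, hx2, h⟩
  have hIP : IsIPDS ({e₁, e₂} : Set (Set V)) {x} := by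
    unfold IsIPDS
    rw [hdom]
  have h1mem : 1 ∈ {n | ∃ S₀ : Set V, S₀.ncard = n ∧ IsIPDS ({e₁, e₂} : Set (Set V)) S₀} :=
    ⟨{x}, Set.ncard_singleton x, hIP⟩
  have h0 : 0 ∉ {n | ∃ S₀ : Set V, S₀.ncard = n ∧ IsIPDS ({e₁, e₂} : Set (Set V)) S₀} := by
    rintro ⟨S₀, hS, hIPS⟩
    have hS0 : S₀ = ∅ := by rwa [Set.ncard_eq_zero (Set.toFinite S₀)] at hS
    subst hS0
    have hd : DomClosure ({e₁, e₂} : Set (Set V)) (∅ : Set V) = ∅ := by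
      simp [DomClosure]
    rw [IsIPDS, hd] at hIPS
    rcases hIPS.cases_head with heq | ⟨T, hstep, _⟩
    · obtain ⟨v⟩ := ‹Nonempty V›
      exact absurd (heq ▸ Set.mem_univ v) (Set.notMem_empty v)
    · obtain ⟨A, e, hA, hAS, _⟩ := hstep
      obtain ⟨a, ha⟩ := hA
      exact hAS ha
  refine le_antisymm (Nat.sInf_le h1mem) ?_
  rw [Nat.one_le_iff_ne_zero]
  intro h
  rcases Nat.sInf_eq_zero.mp h with h' | h'
  · exact h0 h'
  · exact absurd h1mem (h' ▸ id)
end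

section
/- Let H be a connected hypergraph with at least two edges, and let k be the size of a largest edge of H. Then the power domination number of H is at most n − k, where n = |V(H)|. -/
open Set

theorem stmt11 {V : Type*} [Fintype V] (E : Set (Set V))
    (hred : ∀ e ∈ E, ∀ f ∈ E, e ⊆ f → e = f)
    (hconn : Conn E) (hE : 2 ≤ E.ncard)
    (e : Set V) (he : e ∈ E) (hmax : ∀ f ∈ E, f.ncard ≤ e.ncard) :
    gammaP E ≤ Fintype.card V - e.ncard := by
  classical
  have hEfin : E.Finite := Set.toFinite E
  obtain ⟨f, g, hf, hg, hfg⟩ := (Set.one_lt_ncard_iff hEfin).mp hE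
  obtain ⟨f', hf', hfe⟩ : ∃ f' ∈ E, f' ≠ e := by
    by_cases h : f = e
    · exact ⟨g, hg, by rintro rfl; exact hfg h⟩
    · exact ⟨f, hf, h⟩
  have he_ne_univ : e ≠ Set.univ := by
    intro h
    exact hfe (hred f' hf' e he (h ▸ Set.subset_univ f'))
  have he_ne : e.Nonempty := by
    rw [Set.nonempty_iff_ne_empty]
    intro h
    have hle := hmax f' hf'
    rw [h, Set.ncard_empty] at hle
    have : f' = ∅ := (Set.ncard_eq_zero (Set.toFinite f')).mp (Nat.le_zero.mp hle)
    exact hfe (this.trans h.symm)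
  obtain ⟨b, hb⟩ : (eᶜ : Set V).Nonempty := by
    rw [Set.nonempty_compl]; exact he_ne_univ
  set D := DomClosure E (eᶜ) with hD
  have hsub : (eᶜ : Set V) ⊆ D := fun v hv => Set.mem_biUnion hv (Or.inl rfl)
  obtain ⟨a, ha⟩ := he_ne
  have key : ∀ a, Relation.ReflTransGen (Nbr E) b a → a ∈ e → ∃ y ∈ e, y ∈ D := by
    intro a h
    induction h with
    | refl => intro hbe; exact absurd hbe hb
    | @tail m c h1 h2 ih =>
        intro hc
        by_cases hm : m ∈ e
        · exact ih hm
        · exact ⟨c, hc, Set.mem_biUnion (hm : m ∈ eᶜ) (Or.inr h2)⟩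
  obtain ⟨y, hy, hyD⟩ := key a (hconn b a) ha
  have hunion : D ∪ e = Set.univ := by
    apply Set.eq_univ_of_forall
    intro v
    by_cases hv : v ∈ e
    · exact Or.inr hv
    · exact Or.inl (hsub hv)
  have hobs : ObsStep E D Set.univ :=
    ⟨y, hyD, e, he, hy, fun w hw _ => by
      by_contra hwe
      exact hw (hsub hwe), hunion.symm⟩
  have hPDS : IsPDS E (eᶜ) := Relation.ReflTransGen.single hobs
  have hmem : (eᶜ : Set V).ncard ∈ {n | ∃ S₀ : Set V, S₀.ncard = n ∧ IsPDS E S₀} :=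
    ⟨eᶜ, rfl, hPDS⟩
  have hle := Nat.sInf_le hmem
  have hcard : e.ncard + (eᶜ : Set V).ncard = Fintype.card V := by
    rw [Set.ncard_add_ncard_compl, Nat.card_eq_fintype_card]
  calc gammaP E ≤ (eᶜ : Set V).ncard := hle
    _ = Fintype.card V - e.ncard := by omega
end

section
/- Let L_q^(3) (q ≥ 2) be the 3-uniform hypergraph obtained from q copies of the lollipop L₁^(3) (vertices {v,x,y,z,w}, edges {w,x,v},{w,x,y},{w,x,z}) by identifying wᵢ with v_{i+1} cyclically. Then the infectious power domination number, power domination number, and domination number of L_q^(3) all equal q, which is |V(L_q^(3))|/4. -/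
open Set

section Aux
variable {V : Type*} {E : Set (Set V)}

lemma obsStep_infStep {S T : Set V} (h : ObsStep E S T) : InfStep E S T := by
  obtain ⟨v, hv, e, he, hve, hc, rfl⟩ := h
  refine ⟨{v}, e, ⟨v, rfl⟩, by simpa, he, by simpa, ?_, rfl⟩
  rintro w hw ⟨f, hf, hsub⟩
  exact hc w hw ⟨f, hf, hsub (mem_insert_of_mem _ rfl), hsub (mem_insert _ _)⟩

lemma isPDS_isIPDS {S : Set V} (h : IsPDS E S) : IsIPDS E S :=
  Relation.ReflTransGen.mono (r := ObsStep E) (p := InfStep E) (fun _ _ => obsStep_infStep) _ _ h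

lemma isDomSet_isPDS {D : Set V} (h : IsDomSet E D) : IsPDS E D := by
  have : DomClosure E D = univ := by
    ext v
    simp only [DomClosure, mem_iUnion, mem_univ, iff_true]
    obtain ⟨d, hd, hvd⟩ := h v
    exact ⟨d, hd, hvd⟩
  unfold IsPDS
  rw [this]

end Aux

section Lollipop
variable {q : ℕ} [NeZero q]

lemma edge_of_mem2 {E : Set (Set (Fin q × Fin 4))}
    (hE : E = {e | ∃ i : Fin q,
        e = {(i, 0), (i, 1), (i - 1, 0)} ∨
        e = {(i, 0), (i, 1), (i, 2)} ∨
        e = {(i, 0), (i, 1), (i, 3)}})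
    {e : Set (Fin q × Fin 4)} {i : Fin q} (he : e ∈ E) (hm : ((i, 2) : Fin q × Fin 4) ∈ e) :
    e = {(i, 0), (i, 1), (i, 2)} := by
  rw [hE] at he
  obtain ⟨j, hj | hj | hj⟩ := he <;> subst hj <;>
    simp only [mem_insert_iff, mem_singleton_iff, Prod.mk.injEq] at hm ⊢
  · simp at hm
  · have : i = j := by rcases hm with ⟨h,-⟩|⟨h,-⟩|⟨h,-⟩ <;> exact h
    subst this; rfl
  · simp at hm

lemma edge_of_mem3 {E : Set (Set (Fin q × Fin 4))}
    (hE : E = {e | ∃ i : Fin q,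
        e = {(i, 0), (i, 1), (i - 1, 0)} ∨
        e = {(i, 0), (i, 1), (i, 2)} ∨
        e = {(i, 0), (i, 1), (i, 3)}})
    {e : Set (Fin q × Fin 4)} {i : Fin q} (he : e ∈ E) (hm : ((i, 3) : Fin q × Fin 4) ∈ e) :
    e = {(i, 0), (i, 1), (i, 3)} := by
  rw [hE] at he
  obtain ⟨j, hj | hj | hj⟩ := he <;> subst hj <;>
    simp only [mem_insert_iff, mem_singleton_iff, Prod.mk.injEq] at hm ⊢
  · simp at hm
  · simp at hm
  · have : i = j := by rcases hm with ⟨h,-⟩|⟨h,-⟩|⟨h,-⟩ <;> exact h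
    subst this; rfl

end Lollipop

section Lower
variable {q : ℕ} [NeZero q] {E : Set (Set (Fin q × Fin 4))}

lemma ipds_lower
    (hE : E = {e | ∃ i : Fin q,
        e = {(i, 0), (i, 1), (i - 1, 0)} ∨
        e = {(i, 0), (i, 1), (i, 2)} ∨
        e = {(i, 0), (i, 1), (i, 3)}})
    {S₀ : Set (Fin q × Fin 4)} (h : IsIPDS E S₀) : q ≤ S₀.ncard := by
  have key : ∀ i : Fin q, ∃ p ∈ S₀, p.1 = i := by
    intro i
    by_contra hcon
    push_neg at hcon
    -- invariant: neither (i,2) nor (i,3) is ever observed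
    have inv : ∀ S, Relation.ReflTransGen (InfStep E) (DomClosure E S₀) S →
        ((i, 2) : Fin q × Fin 4) ∉ S ∧ ((i, 3) : Fin q × Fin 4) ∉ S := by
      intro S hS
      induction hS with
      | refl =>
        constructor <;>
        · rintro hmem
          simp only [DomClosure, mem_iUnion, ClosedNbhd, mem_setOf_eq] at hmem
          obtain ⟨d, hd, heq | ⟨e, he, hde, hme⟩⟩ := hmem
          · exact hcon d hd (congrArg Prod.fst heq.symm)
          · first
              | (have he2 := edge_of_mem2 hE he hme
                 rw [he2] at hde
                 rcases hde with h|h|h <;> exact hcon d hd (congrArg Prod.fst h))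
              | (have he2 := edge_of_mem3 hE he hme
                 rw [he2] at hde
                 rcases hde with h|h|h <;> exact hcon d hd (congrArg Prod.fst h))
      | tail hST hstep ih =>
        obtain ⟨A, e, hAne, hAS, heE, hAe, hcond, rfl⟩ := hstep
        have hA01 : ∀ c : Fin 4, ((i, c) : Fin q × Fin 4) ∈ e →
            (∀ a ∈ A, a = (i, 0) ∨ a = (i, 1)) → False ∨ True := fun _ _ _ => Or.inr trivial
        constructor
        · rintro (h2 | h2)
          · exact ih.1 h2
          · have he2 := edge_of_mem2 hE heE h2
            have hAsub : ∀ a ∈ A, a = ((i, 0) : Fin q × Fin 4) ∨ a = (i, 1) := by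
              intro a ha
              have := hAe ha
              rw [he2] at this
              rcases this with h|h|h
              · exact Or.inl h
              · exact Or.inr h
              · exact absurd (h ▸ hAS ha) ih.1
            have h3 : ((i, 3) : Fin q × Fin 4) ∈ e := by
              refine hcond _ ih.2 ⟨{(i, 0), (i, 1), (i, 3)}, ?_, ?_⟩
              · rw [hE]; exact ⟨i, Or.inr (Or.inr rfl)⟩
              · rintro a (rfl | ha)
                · simp
                · rcases hAsub a ha with rfl | rfl <;> simp
            rw [he2] at h3
            simp [Prod.ext_iff] at h3
        · rintro (h3 | h3)
          · exact ih.2 h3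
          · have he3 := edge_of_mem3 hE heE h3
            have hAsub : ∀ a ∈ A, a = ((i, 0) : Fin q × Fin 4) ∨ a = (i, 1) := by
              intro a ha
              have := hAe ha
              rw [he3] at this
              rcases this with h|h|h
              · exact Or.inl h
              · exact Or.inr h
              · exact absurd (h ▸ hAS ha) ih.2
            have h2 : ((i, 2) : Fin q × Fin 4) ∈ e := by
              refine hcond _ ih.1 ⟨{(i, 0), (i, 1), (i, 2)}, ?_, ?_⟩
              · rw [hE]; exact ⟨i, Or.inr (Or.inl rfl)⟩
              · rintro a (rfl | ha)
                · simp
                · rcases hAsub a ha with rfl | rfl <;> simp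
            rw [he3] at h2
            simp [Prod.ext_iff] at h2
    exact (inv univ h).1 (mem_univ _)
  have himg : Prod.fst '' S₀ = (univ : Set (Fin q)) := by
    ext i
    simp only [mem_image, mem_univ, iff_true]
    obtain ⟨p, hp, hpi⟩ := key i
    exact ⟨p, hp, hpi⟩
  calc q = (Prod.fst '' S₀).ncard := by
            rw [himg, ncard_univ, Nat.card_eq_fintype_card, Fintype.card_fin]
    _ ≤ S₀.ncard := ncard_image_le S₀.toFinite

end Lower

section Upper
variable {q : ℕ} [NeZero q] {E : Set (Set (Fin q × Fin 4))}

lemma xset_dom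
    (hE : E = {e | ∃ i : Fin q,
        e = {(i, 0), (i, 1), (i - 1, 0)} ∨
        e = {(i, 0), (i, 1), (i, 2)} ∨
        e = {(i, 0), (i, 1), (i, 3)}}) :
    IsDomSet E (Set.range (fun i : Fin q => ((i, 1) : Fin q × Fin 4))) := by
  rintro ⟨i, c⟩
  refine ⟨(i, 1), ⟨i, rfl⟩, ?_⟩
  by_cases hc : c = 1
  · exact Or.inl (by simp [hc])
  · refine Or.inr ?_
    by_cases hc2 : c = 2
    · exact ⟨{(i, 0), (i, 1), (i, 2)}, by rw [hE]; exact ⟨i, Or.inr (Or.inl rfl)⟩,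
        by simp, by simp [hc2]⟩
    by_cases hc3 : c = 3
    · exact ⟨{(i, 0), (i, 1), (i, 3)}, by rw [hE]; exact ⟨i, Or.inr (Or.inr rfl)⟩,
        by simp, by simp [hc3]⟩
    have hc0 : c = 0 := by omega
    exact ⟨{(i, 0), (i, 1), (i, 2)}, by rw [hE]; exact ⟨i, Or.inr (Or.inl rfl)⟩,
        by simp, by simp [hc0]⟩

lemma xset_ncard :
    (Set.range (fun i : Fin q => ((i, 1) : Fin q × Fin 4))).ncard = q := by
  rw [← Set.image_univ, Set.ncard_image_of_injective _
    (fun a b hab => by simpa [Prod.ext_iff] using hab), ncard_univ,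
    Nat.card_eq_fintype_card, Fintype.card_fin]

end Upper


theorem stmt14 (q : ℕ) [NeZero q] (hq : 2 ≤ q)
    (E : Set (Set (Fin q × Fin 4)))
    (hE : E = {e | ∃ i : Fin q,
        e = {(i, 0), (i, 1), (i - 1, 0)} ∨
        e = {(i, 0), (i, 1), (i, 2)} ∨
        e = {(i, 0), (i, 1), (i, 3)}}) :
    gammaPI E = q ∧ gammaP E = q ∧ gammaDom E = q ∧
      Fintype.card (Fin q × Fin 4) = 4 * q := by
  have hdom := xset_dom hE
  have hpds := isDomSet_isPDS hdom
  have hipds := isPDS_isIPDS hpds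
  have hn : (Set.range (fun i : Fin q => ((i, 1) : Fin q × Fin 4))).ncard = q := xset_ncard
  refine ⟨?_, ?_, ?_, by simp [mul_comm]⟩
  · refine le_antisymm (Nat.sInf_le ⟨_, hn, hipds⟩) (le_csInf ⟨q, _, hn, hipds⟩ ?_)
    rintro n ⟨S₀, rfl, h⟩
    exact ipds_lower hE h
  · refine le_antisymm (Nat.sInf_le ⟨_, hn, hpds⟩) (le_csInf ⟨q, _, hn, hpds⟩ ?_)
    rintro n ⟨S₀, rfl, h⟩
    exact ipds_lower hE (isPDS_isIPDS h)
  · refine le_antisymm (Nat.sInf_le ⟨_, hn, hdom⟩) (le_csInf ⟨q, _, hn, hdom⟩ ?_)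
    rintro n ⟨S₀, rfl, h⟩
    exact ipds_lower hE (isPDS_isIPDS (isDomSet_isPDS h))
end

section
/- For any connected circular arc interval hypergraph H with at least one edge, both the infectious power domination number and the power domination number equal 1. -/
open Set

/-- A set of vertices of the cycle `ZMod n` forming a circular arc (consecutive vertices). -/
def IsArc (n : ℕ) (s : Set (ZMod n)) : Prop :=
  ∃ (a : ZMod n) (l : ℕ), s = {b | ∃ j : ℕ, j < l ∧ b = a + (j : ZMod n)}

namespace Stmt15Aux

/-- arc as image of an integer window -/
def aset (n : ℕ) (a : ZMod n) (x y : ℤ) : Set (ZMod n) :=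
  (fun j : ℤ => a + (j : ZMod n)) '' Set.Ico x y

variable {n : ℕ}

lemma mem_aset {a b : ZMod n} {x y : ℤ} :
    b ∈ aset n a x y ↔ ∃ j : ℤ, x ≤ j ∧ j < y ∧ b = a + (j : ZMod n) := by
  constructor
  · rintro ⟨j, hj, rfl⟩; exact ⟨j, hj.1, hj.2, rfl⟩
  · rintro ⟨j, h1, h2, rfl⟩; exact ⟨j, ⟨h1, h2⟩, rfl⟩

lemma mem_aset_intro {a : ZMod n} {x y : ℤ} (j : ℤ) (h1 : x ≤ j) (h2 : j < y) :
    a + (j : ZMod n) ∈ aset n a x y := ⟨j, ⟨h1, h2⟩, rfl⟩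

lemma aset_rebase (a : ZMod n) (t x y : ℤ) :
    aset n (a + (t : ZMod n)) x y = aset n a (x + t) (y + t) := by
  ext b; simp only [mem_aset]
  constructor
  · rintro ⟨j, h1, h2, rfl⟩
    exact ⟨j + t, by omega, by omega, by push_cast; ring⟩
  · rintro ⟨j, h1, h2, rfl⟩
    exact ⟨j - t, by omega, by omega, by push_cast; ring⟩

lemma aset_sub_period (a : ZMod n) (x y : ℤ) :
    aset n a x y = aset n a (x - n) (y - n) := by
  ext b; simp only [mem_aset]
  constructor
  · rintro ⟨j, h1, h2, rfl⟩
    refine ⟨j - n, by omega, by omega, ?_⟩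
    push_cast
    simp [ZMod.natCast_self]
  · rintro ⟨j, h1, h2, rfl⟩
    refine ⟨j + n, by omega, by omega, ?_⟩
    push_cast
    simp [ZMod.natCast_self]

lemma aset_mono {a : ZMod n} {x y x' y' : ℤ} (h1 : x' ≤ x) (h2 : y ≤ y') :
    aset n a x y ⊆ aset n a x' y' := by
  rintro b ⟨j, ⟨hj1, hj2⟩, rfl⟩
  exact ⟨j, ⟨by omega, by omega⟩, rfl⟩

lemma int_dvd_cases {N d : ℤ} (h : (N:ℤ) ∣ d) (h0 : 0 < N) (h2 : -(2*N) < d) (h3 : d < N) :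
    d = 0 ∨ d = -N := by
  obtain ⟨k, rfl⟩ := h
  have hk1 : k ≤ 0 := by
    by_contra hc; push_neg at hc
    have : N * 1 ≤ N * k := mul_le_mul_of_nonneg_left (by omega) (le_of_lt h0)
    linarith
  have hk2 : -1 ≤ k := by
    by_contra hc; push_neg at hc
    have : N * k ≤ N * (-2) := mul_le_mul_of_nonneg_left (by omega) (le_of_lt h0)
    linarith
  rcases (by omega : k = 0 ∨ k = -1) with rfl | rfl
  · left; ring
  · right; ring

lemma cast_eq_cast_iff {j i : ℤ} :
    ((j : ZMod n) = (i : ZMod n)) ↔ (n:ℤ) ∣ (j - i) := by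
  rw [ZMod.intCast_eq_intCast_iff, Int.modEq_iff_dvd]
  exact dvd_sub_comm

lemma eq_of_small {j i : ℤ} (h : (j : ZMod n) = (i : ZMod n))
    (h2 : -(n:ℤ) < j - i) (h3 : j - i < n) : j = i := by
  have hd : (n:ℤ) ∣ (j - i) := cast_eq_cast_iff.1 h
  have := Int.eq_zero_of_abs_lt_dvd hd (abs_lt.2 ⟨h2, h3⟩)
  omega

lemma exists_rep [NeZero n] (a b : ZMod n) :
    ∃ t : ℤ, 0 ≤ t ∧ t < n ∧ b = a + (t : ZMod n) := by
  refine ⟨((b - a).val : ℤ), by positivity, ?_, ?_⟩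
  · exact_mod_cast ZMod.val_lt (b - a)
  · have h : (((b - a).val : ℕ) : ZMod n) = b - a := ZMod.natCast_rightInverse (b - a)
    push_cast
    rw [h]; ring

lemma aset_univ [NeZero n] (a : ZMod n) {x y : ℤ} (h : x + n ≤ y) :
    aset n a x y = univ := by
  ext b
  simp only [mem_univ, iff_true, mem_aset]
  obtain ⟨t, h0, h1, rfl⟩ := exists_rep a b
  have hn0 : (0:ℤ) < n := by omega
  have hm0 := Int.emod_nonneg (t - x) (by omega : (n:ℤ) ≠ 0)
  have hm1 := Int.emod_lt_of_pos (t - x) hn0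
  refine ⟨x + (t - x) % n, by omega, by omega, ?_⟩
  have hdvd : (n:ℤ) ∣ (x + (t - x) % n - t) := by
    have : (t - x) % n = t - x - n * ((t - x) / n) := by
      rw [Int.emod_def]
    exact ⟨-((t - x) / n), by rw [this]; ring⟩
  have := cast_eq_cast_iff.2 hdvd
  rw [this]

lemma mem_aset_small [NeZero n] {a : ZMod n} {x y t : ℤ} (hx : 0 ≤ x) (hy : y ≤ n)
    (ht0 : 0 ≤ t) (htn : t < n) :
    a + (t : ZMod n) ∈ aset n a x y ↔ (x ≤ t ∧ t < y) := by
  constructor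
  · rintro ⟨j, ⟨hj1, hj2⟩, hj⟩
    have h2 : (j : ZMod n) = (t : ZMod n) :=
      add_left_cancel (show a + (j:ZMod n) = a + (t:ZMod n) from hj)
    have := eq_of_small h2 (by omega) (by omega)
    omega
  · rintro ⟨h1, h2⟩; exact mem_aset_intro t h1 h2

lemma aset_compl [NeZero n] (a : ZMod n) {s : ℤ} (h0 : 0 ≤ s) (h1 : s ≤ n) :
    (aset n a 0 s)ᶜ = aset n a s n := by
  ext b
  obtain ⟨t, ht0, htn, rfl⟩ := exists_rep a b
  rw [mem_compl_iff, mem_aset_small le_rfl (by omega) ht0 htn,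
    mem_aset_small h0 le_rfl ht0 htn]
  omega

lemma aset_ne_univ [NeZero n] (a : ZMod n) {s : ℤ} (h0 : 0 ≤ s) (h1 : s < n) :
    aset n a 0 s ≠ univ := by
  intro h
  have : a + ((s:ℤ) : ZMod n) ∈ aset n a 0 s := h ▸ mem_univ _
  rw [mem_aset_small le_rfl (by omega) h0 h1] at this
  omega

lemma isArc_iff {e : Set (ZMod n)} :
    IsArc n e ↔ ∃ (a : ZMod n) (l : ℕ), e = aset n a 0 l := by
  constructor
  · rintro ⟨a, l, rfl⟩
    refine ⟨a, l, ?_⟩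
    ext b
    simp only [mem_setOf_eq, mem_aset]
    constructor
    · rintro ⟨j, hj, rfl⟩
      exact ⟨(j:ℤ), by positivity, by exact_mod_cast hj, by push_cast; ring⟩
    · rintro ⟨j, h1, h2, rfl⟩
      refine ⟨j.toNat, by omega, ?_⟩
      congr 1
      rw [← Int.cast_natCast, Int.toNat_of_nonneg h1]
  · rintro ⟨a, l, rfl⟩
    refine ⟨a, l, ?_⟩
    ext b
    simp only [mem_setOf_eq, mem_aset]
    constructor
    · rintro ⟨j, h1, h2, rfl⟩
      refine ⟨j.toNat, by omega, ?_⟩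
      congr 1
      rw [← Int.cast_natCast, Int.toNat_of_nonneg h1]
    · rintro ⟨j, hj, rfl⟩
      exact ⟨(j:ℤ), by positivity, by exact_mod_cast hj, by push_cast; ring⟩



/-- combined witness step -/
def GoodStep {V : Type*} (E : Set (Set V)) (S T : Set V) : Prop :=
  ∃ v ∈ S, ∃ e ∈ E, v ∈ e ∧ (∀ w ∉ S, (∃ f ∈ E, v ∈ f ∧ w ∈ f) → w ∈ e) ∧ T = S ∪ e

lemma exists_crossing {V : Type*} {E : Set (Set V)} (hconn : Conn E) {S : Set V}
    (h1 : S.Nonempty) (h2 : Sᶜ.Nonempty) :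
    ∃ f ∈ E, (f ∩ S).Nonempty ∧ (f \ S).Nonempty := by
  obtain ⟨u, hu⟩ := h1
  obtain ⟨w, hw⟩ := h2
  suffices H : ∀ u, Relation.ReflTransGen (Nbr E) u w → u ∈ S →
      ∃ f ∈ E, (f ∩ S).Nonempty ∧ (f \ S).Nonempty from H u (hconn u w) hu
  intro u h
  induction h using Relation.ReflTransGen.head_induction_on with
  | refl => intro hu; exact absurd hu hw
  | head h' _ ih =>
    rename_i p q _
    intro hp
    by_cases hq : q ∈ S
    · exact ih hq
    · obtain ⟨e, he, hpe, hqe⟩ := h'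
      exact ⟨e, he, ⟨p, hpe, hp⟩, ⟨q, hqe, hq⟩⟩

variable {n : ℕ}

lemma classify [NeZero n] {E : Set (Set (ZMod n))} (harc : ∀ e ∈ E, IsArc n e)
    {a : ZMod n} {s : ℤ} (hs1 : 1 ≤ s) (hsn : s < n) {f : Set (ZMod n)} (hf : f ∈ E)
    (hfS : (f ∩ aset n a 0 s).Nonempty) (hfd : (f \ aset n a 0 s).Nonempty)
    (hSf : ¬ aset n a 0 s ⊆ f) (hcf : ¬ (aset n a 0 s)ᶜ ⊆ f) :
    (∃ x r, 0 < x ∧ x < s ∧ 1 ≤ r ∧ s + r ≤ n ∧ f = aset n a x (s + r)) ∨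
    (∃ l y, 1 ≤ l ∧ l ≤ n - s ∧ 1 ≤ y ∧ y < s ∧ f = aset n a (-l) y) := by
  obtain ⟨c, L, hfeq⟩ := isArc_iff.1 (harc f hf)
  obtain ⟨t, ht0, htn, rfl⟩ := exists_rep a c
  rw [aset_rebase] at hfeq
  set x := (0:ℤ) + t with hxdef
  set Y := (L:ℤ) + t with hYdef
  have hx0 : 0 ≤ x := by omega
  have hxn : x < n := by omega
  -- f is nonempty
  have hm1 : x < Y := by
    rcases hfS with ⟨b, hbf, -⟩
    rw [hfeq, mem_aset] at hbf
    obtain ⟨j, h1, h2, -⟩ := hbf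
    omega
  -- f is not everything
  have hmn : Y - x < n := by
    by_contra hc
    refine hcf ?_
    rw [hfeq, aset_univ a (x := x) (y := Y) (by omega)]
    exact subset_univ _
  by_cases hcase : Y ≤ n
  · -- no wrap: right-crossing
    left
    -- x < s
    have hxs : x < s := by
      rcases hfS with ⟨b, hbf, hbS⟩
      rw [hfeq, mem_aset] at hbf
      obtain ⟨j, hj1, hj2, rfl⟩ := hbf
      rw [mem_aset_small le_rfl (by omega) (by omega) (by omega)] at hbS
      omega
    -- s < Y
    have hsY : s < Y := by
      rcases hfd with ⟨b, hbf, hbS⟩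
      rw [hfeq, mem_aset] at hbf
      obtain ⟨j, hj1, hj2, rfl⟩ := hbf
      rw [mem_aset_small le_rfl (by omega) (by omega) (by omega)] at hbS
      omega
    -- 0 < x
    have hx0' : 0 < x := by
      rcases lt_or_ge 0 x with h | h
      · exact h
      · exfalso
        apply hSf
        intro b hb
        rw [mem_aset] at hb
        obtain ⟨i, h1, h2, rfl⟩ := hb
        rw [hfeq]
        exact mem_aset_intro i (by omega) (by omega)
    exact ⟨x, Y - s, hx0', hxs, by omega, by omega, by rw [hfeq]; congr 1; ring⟩
  · -- wrap: left-crossing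
    right
    push_neg at hcase
    have hsx : s ≤ x := by
      rcases lt_or_ge x s with h | h
      · exfalso
        apply hcf
        rw [aset_compl a (by omega) (by omega)]
        intro b hb
        rw [mem_aset] at hb
        obtain ⟨i, h1, h2, rfl⟩ := hb
        rw [hfeq]
        exact mem_aset_intro i (by omega) (by omega)
      · exact h
    have hYn : Y - n < s := by
      rcases lt_or_ge (Y - n) s with h | h
      · exact h
      · exfalso
        apply hSf
        intro b hb
        rw [mem_aset] at hb
        obtain ⟨i, h1, h2, rfl⟩ := hb
        rw [hfeq]
        have : a + (i : ZMod n) = a + ((i + n : ℤ) : ZMod n) := by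
          push_cast; simp [ZMod.natCast_self]
        rw [this]
        exact mem_aset_intro (i + n) (by omega) (by omega)
    refine ⟨n - x, Y - n, by omega, by omega, by omega, by omega, ?_⟩
    rw [hfeq, aset_sub_period]
    congr 1 <;> ring

lemma right_step [NeZero n] {E : Set (Set (ZMod n))}
    (hred : ∀ e ∈ E, ∀ f ∈ E, e ⊆ f → e = f) (harc : ∀ e ∈ E, IsArc n e)
    {a : ZMod n} {s : ℤ} (hs1 : 1 ≤ s) (hsn : s < n)
    {e₀ : Set (ZMod n)} (he₀ : e₀ ∈ E) (he₀S : e₀ ⊆ aset n a 0 s)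
    (hnoj : ∀ g ∈ E, (g ∩ aset n a 0 s).Nonempty → ¬ (aset n a 0 s)ᶜ ⊆ g)
    {f : Set (ZMod n)} (hf : f ∈ E) {x r : ℤ}
    (hx0 : 0 < x) (hxs : x < s) (hr : 1 ≤ r) (hrn : s + r ≤ n)
    (hfeq : f = aset n a x (s + r)) :
    ∃ r', r ≤ r' ∧ s + r' ≤ n ∧ GoodStep E (aset n a 0 s) (aset n a 0 (s + r')) := by
  have hPmax := Int.exists_greatest_of_bdd
    (P := fun ρ : ℤ => 1 ≤ ρ ∧ s + ρ ≤ n ∧ ∃ g ∈ E, ∃ ξ, 0 < ξ ∧ ξ < s ∧ g = aset n a ξ (s + ρ))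
    ⟨n - s, fun z hz => by omega⟩ ⟨r, hr, hrn, f, hf, x, hx0, hxs, hfeq⟩
  obtain ⟨r', ⟨hr'1, hr'n, g, hg, ξ, hξ0, hξs, hgeq⟩, hmax⟩ := hPmax
  have hrr' : r ≤ r' := hmax r ⟨hr, hrn, f, hf, x, hx0, hxs, hfeq⟩
  refine ⟨r', hrr', hr'n, ?_⟩
  refine ⟨a + ((s - 1 : ℤ) : ZMod n), mem_aset_intro (s-1) (by omega) (by omega),
    g, hg, ?_, ?_, ?_⟩
  · rw [hgeq]; exact mem_aset_intro (s-1) (by omega) (by omega)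
  · -- all unobserved neighbors of v are in g
    intro w hw hex
    obtain ⟨f', hf', hvf', hwf'⟩ := hex
    have hvS : a + ((s - 1 : ℤ) : ZMod n) ∈ aset n a 0 s := mem_aset_intro (s-1) (by omega) (by omega)
    have hSf' : ¬ aset n a 0 s ⊆ f' := by
      intro hsub
      have := hred e₀ he₀ f' hf' (he₀S.trans hsub)
      rw [← this] at hwf'
      exact hw (he₀S hwf')
    have hclass := classify harc hs1 hsn hf' ⟨_, hvf', hvS⟩ ⟨w, hwf', hw⟩ hSf'
      (hnoj f' hf' ⟨_, hvf', hvS⟩)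
    rcases hclass with ⟨x', r'', hx'0, hx's, hr''1, hr''n, hfeq'⟩ |
      ⟨l, y, hl1, hln, hy1, hys, hfeq'⟩
    · -- right-crossing: reach at most r'
      have hle : r'' ≤ r' := hmax r'' ⟨hr''1, hr''n, f', hf', x', hx'0, hx's, hfeq'⟩
      rw [hfeq', mem_aset] at hwf'
      obtain ⟨j, hj1, hj2, rfl⟩ := hwf'
      have hjs : s ≤ j := by
        by_contra hc
        exact hw (mem_aset_intro j (by omega) (by omega))
      rw [hgeq]
      exact mem_aset_intro j (by omega) (by omega)
    · -- left-crossing edge cannot contain v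
      exfalso
      rw [hfeq', mem_aset] at hvf'
      obtain ⟨j, hj1, hj2, hj⟩ := hvf'
      have h2 : ((s - 1 : ℤ) : ZMod n) = (j : ZMod n) :=
        add_left_cancel (show a + ((s-1 : ℤ):ZMod n) = a + (j:ZMod n) from hj)
      have := eq_of_small h2 (by omega) (by omega)
      omega
  · -- aset n a 0 (s + r') = S ∪ g
    ext b
    simp only [Set.mem_union]
    constructor
    · intro hb
      rw [mem_aset] at hb
      obtain ⟨j, hj1, hj2, rfl⟩ := hb
      rcases lt_or_ge j s with h | h
      · exact Or.inl (mem_aset_intro j (by omega) (by omega))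
      · exact Or.inr (by rw [hgeq]; exact mem_aset_intro j (by omega) (by omega))
    · rintro (hb | hb)
      · exact aset_mono le_rfl (by omega) hb
      · rw [hgeq] at hb
        exact aset_mono (by omega) le_rfl hb

lemma left_step [NeZero n] {E : Set (Set (ZMod n))}
    (hred : ∀ e ∈ E, ∀ f ∈ E, e ⊆ f → e = f) (harc : ∀ e ∈ E, IsArc n e)
    {a : ZMod n} {s : ℤ} (hs1 : 1 ≤ s) (hsn : s < n)
    {e₀ : Set (ZMod n)} (he₀ : e₀ ∈ E) (he₀S : e₀ ⊆ aset n a 0 s)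
    (hnoj : ∀ g ∈ E, (g ∩ aset n a 0 s).Nonempty → ¬ (aset n a 0 s)ᶜ ⊆ g)
    {f : Set (ZMod n)} (hf : f ∈ E) {l y : ℤ}
    (hl1 : 1 ≤ l) (hln : l ≤ n - s) (hy1 : 1 ≤ y) (hys : y < s)
    (hfeq : f = aset n a (-l) y) :
    ∃ l', l ≤ l' ∧ s + l' ≤ n ∧ GoodStep E (aset n a 0 s) (aset n a (-l') s) := by
  have hPmax := Int.exists_greatest_of_bdd
    (P := fun μ : ℤ => 1 ≤ μ ∧ μ ≤ n - s ∧ ∃ g ∈ E, ∃ η, 1 ≤ η ∧ η < s ∧ g = aset n a (-μ) η)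
    ⟨n - s, fun z hz => by omega⟩ ⟨l, hl1, hln, f, hf, y, hy1, hys, hfeq⟩
  obtain ⟨l', ⟨hl'1, hl'n, g, hg, η, hη0, hηs, hgeq⟩, hmax⟩ := hPmax
  have hll' : l ≤ l' := hmax l ⟨hl1, hln, f, hf, y, hy1, hys, hfeq⟩
  refine ⟨l', hll', by omega, ?_⟩
  refine ⟨a + ((0 : ℤ) : ZMod n), mem_aset_intro 0 le_rfl (by omega),
    g, hg, ?_, ?_, ?_⟩
  · rw [hgeq]; exact mem_aset_intro 0 (by omega) (by omega)
  · intro w hw hex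
    obtain ⟨f', hf', hvf', hwf'⟩ := hex
    have hvS : a + ((0 : ℤ) : ZMod n) ∈ aset n a 0 s := mem_aset_intro 0 le_rfl (by omega)
    have hSf' : ¬ aset n a 0 s ⊆ f' := by
      intro hsub
      have := hred e₀ he₀ f' hf' (he₀S.trans hsub)
      rw [← this] at hwf'
      exact hw (he₀S hwf')
    have hclass := classify harc hs1 hsn hf' ⟨_, hvf', hvS⟩ ⟨w, hwf', hw⟩ hSf'
      (hnoj f' hf' ⟨_, hvf', hvS⟩)
    rcases hclass with ⟨x', r'', hx'0, hx's, hr''1, hr''n, hfeq'⟩ |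
      ⟨l'', y'', hl''1, hl''n, hy''1, hy''s, hfeq'⟩
    · -- right-crossing edge cannot contain v = a
      exfalso
      rw [hfeq', mem_aset] at hvf'
      obtain ⟨j, hj1, hj2, hj⟩ := hvf'
      have h2 : ((0 : ℤ) : ZMod n) = (j : ZMod n) :=
        add_left_cancel (show a + ((0 : ℤ):ZMod n) = a + (j:ZMod n) from hj)
      have := eq_of_small h2 (by omega) (by omega)
      omega
    · have hle : l'' ≤ l' := hmax l'' ⟨hl''1, hl''n, f', hf', y'', hy''1, hy''s, hfeq'⟩
      rw [hfeq', mem_aset] at hwf'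
      obtain ⟨j, hj1, hj2, rfl⟩ := hwf'
      have hjs : j < 0 := by
        by_contra hc
        push_neg at hc
        exact hw (mem_aset_intro j (by omega) (by omega))
      rw [hgeq]
      exact mem_aset_intro j (by omega) (by omega)
  · ext b
    simp only [Set.mem_union]
    constructor
    · intro hb
      rw [mem_aset] at hb
      obtain ⟨j, hj1, hj2, rfl⟩ := hb
      rcases lt_or_ge j 0 with h | h
      · exact Or.inr (by rw [hgeq]; exact mem_aset_intro j (by omega) (by omega))
      · exact Or.inl (mem_aset_intro j (by omega) (by omega))
    · rintro (hb | hb)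
      · exact aset_mono (by omega) le_rfl hb
      · rw [hgeq] at hb
        exact aset_mono le_rfl (by omega) hb

lemma domClosure_singleton {V : Type*} (E : Set (Set V)) (v : V) :
    DomClosure E {v} = ClosedNbhd E v := by
  simp [DomClosure]

lemma grow [NeZero n] {E : Set (Set (ZMod n))}
    (hred : ∀ e ∈ E, ∀ f ∈ E, e ⊆ f → e = f) (hconn : Conn E)
    (harc : ∀ e ∈ E, IsArc n e) :
    ∀ k : ℕ, ∀ (a : ZMod n) (s : ℤ), 1 ≤ s → s ≤ n →
      (∃ e₀ ∈ E, e₀ ⊆ aset n a 0 s) → ((n:ℤ) - s).toNat = k →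
      Relation.ReflTransGen (GoodStep E) (aset n a 0 s) Set.univ := by
  intro k
  induction k using Nat.strong_induction_on with
  | _ k ih =>
  rintro a s hs1 hsn ⟨e₀, he₀, he₀S⟩ hk
  rcases le_or_gt (n:ℤ) s with hns | hns
  · rw [aset_univ a (by omega)]
  have hSne : (aset n a 0 s).Nonempty :=
    ⟨a + ((0:ℤ):ZMod n), mem_aset_intro 0 le_rfl (by omega)⟩
  have hScne : (aset n a 0 s)ᶜ.Nonempty := by
    rw [aset_compl a (by omega) (by omega)]
    exact ⟨a + ((s:ℤ):ZMod n), mem_aset_intro s le_rfl (by omega)⟩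
  by_cases hjack : ∃ g ∈ E, (g ∩ aset n a 0 s).Nonempty ∧ (aset n a 0 s)ᶜ ⊆ g
  · obtain ⟨g, hg, ⟨v, hvg, hvS⟩, hsub⟩ := hjack
    have hstep : GoodStep E (aset n a 0 s) (aset n a 0 s ∪ g) :=
      ⟨v, hvS, g, hg, hvg, fun w hw _ => hsub hw, rfl⟩
    have huniv : aset n a 0 s ∪ g = Set.univ := by
      apply eq_univ_of_forall
      intro b
      by_cases hb : b ∈ aset n a 0 s
      · exact Set.mem_union_left _ hb
      · exact Set.mem_union_right _ (hsub hb)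
    exact Relation.ReflTransGen.single (huniv ▸ hstep)
  · push_neg at hjack
    obtain ⟨f, hfE, hfi, hfd⟩ := exists_crossing hconn hSne hScne
    have hSf : ¬ aset n a 0 s ⊆ f := by
      intro hsub
      have h := hred e₀ he₀ f hfE (he₀S.trans hsub)
      obtain ⟨w, hwf, hw⟩ := hfd
      rw [← h] at hwf
      exact hw (he₀S hwf)
    rcases classify harc hs1 hns hfE hfi hfd hSf (hjack f hfE hfi) with
      ⟨x, r, hx0, hxs, hr1, hrn, hfeq⟩ | ⟨l, y, hl1, hln, hy1, hys, hfeq⟩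
    · obtain ⟨r', hge, hr'n, hstep⟩ :=
        right_step hred harc hs1 hns he₀ he₀S hjack hfE hx0 hxs hr1 hrn hfeq
      refine Relation.ReflTransGen.head hstep ?_
      exact ih ((n:ℤ) - (s + r')).toNat (by omega) a (s + r') (by omega) (by omega)
        ⟨e₀, he₀, he₀S.trans (aset_mono le_rfl (by omega))⟩ rfl
    · obtain ⟨l', hge, hl'n, hstep⟩ :=
        left_step hred harc hs1 hns he₀ he₀S hjack hfE hl1 hln hy1 hys hfeq
      have hre : aset n a (-l') s = aset n (a + ((-l' : ℤ) : ZMod n)) 0 (s + l') := by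
        rw [aset_rebase]; congr 1 <;> ring
      rw [hre] at hstep
      refine Relation.ReflTransGen.head hstep ?_
      exact ih ((n:ℤ) - (s + l')).toNat (by omega) _ (s + l') (by omega) (by omega)
        ⟨e₀, he₀, hre ▸ (he₀S.trans (aset_mono (by omega) le_rfl))⟩ rfl

lemma start [NeZero n] {E : Set (Set (ZMod n))} (harc : ∀ e ∈ E, IsArc n e) (v : ZMod n)
    (hD : ClosedNbhd E v ≠ Set.univ) :
    ∃ a s, 1 ≤ s ∧ s ≤ (n:ℤ) ∧ ClosedNbhd E v = aset n a 0 s := by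
  have hvD : v ∈ ClosedNbhd E v := Or.inl rfl
  have hedge : ∀ e ∈ E, v ∈ e → e ⊆ ClosedNbhd E v :=
    fun e he hv b hb => Or.inr ⟨e, he, hv, hb⟩
  have hwin : ∀ e ∈ E, v ∈ e → ∃ α β : ℤ, α ≤ 0 ∧ 0 < β ∧ β - α < n ∧ e = aset n v α β := by
    intro e he hv
    obtain ⟨c, L, hceq⟩ := isArc_iff.1 (harc e he)
    have hLn : (L:ℤ) < n := by
      by_contra hc
      apply hD
      apply eq_univ_of_univ_subset
      have he2 : e = Set.univ := by rw [hceq]; exact aset_univ c (by omega)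
      exact he2 ▸ hedge e he hv
    have hv' : v ∈ aset n c 0 L := hceq ▸ hv
    rw [mem_aset] at hv'
    obtain ⟨j₀, hj0, hjL, hveq⟩ := hv'
    refine ⟨-j₀, L - j₀, by omega, by omega, by omega, ?_⟩
    have hc : c = v + ((-j₀ : ℤ) : ZMod n) := by rw [hveq]; push_cast; ring
    rw [hceq, hc, aset_rebase]
    congr 1 <;> ring
  have hCne : ∃ t : ℤ, 1 ≤ t ∧ t ≤ (n:ℤ) - 1 ∧ v + (t : ZMod n) ∉ ClosedNbhd E v := by
    obtain ⟨b, hb⟩ := (ne_univ_iff_exists_notMem _).1 hD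
    obtain ⟨t, ht0, htn, rfl⟩ := exists_rep v b
    have ht1 : t ≠ 0 := by
      rintro rfl
      have h0 : v + ((0:ℤ):ZMod n) = v := by norm_num
      rw [h0] at hb
      exact hb hvD
    exact ⟨t, by omega, by omega, hb⟩
  have hconv : ∀ p q r : ℤ, (1 ≤ p ∧ p ≤ (n:ℤ) - 1 ∧ v + (p : ZMod n) ∉ ClosedNbhd E v) →
      (1 ≤ r ∧ r ≤ (n:ℤ) - 1 ∧ v + (r : ZMod n) ∉ ClosedNbhd E v) → p ≤ q → q ≤ r →
      (1 ≤ q ∧ q ≤ (n:ℤ) - 1 ∧ v + (q : ZMod n) ∉ ClosedNbhd E v) := by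
    rintro p q r ⟨hp1, hpn, hpD⟩ ⟨hr1, hrn, hrD⟩ hpq hqr
    refine ⟨by omega, by omega, ?_⟩
    intro hqD
    rcases hqD with heq | ⟨e, he, hve, hqe⟩
    · have h2 : ((q:ℤ) : ZMod n) = ((0:ℤ) : ZMod n) := by
        have h3 : (q : ZMod n) = 0 := by
          have := heq
          rwa [add_eq_left] at this
        rw [h3]; norm_num
      have := eq_of_small h2 (by omega) (by omega)
      omega
    · obtain ⟨α, β, hα, hβ, hlen, heeq⟩ := hwin e he hve
      have hsub := hedge e he hve
      rw [heeq, mem_aset] at hqe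
      obtain ⟨j, hj1, hj2, hjeq⟩ := hqe
      have h2 : ((j:ℤ) : ZMod n) = ((q:ℤ) : ZMod n) :=
        (add_left_cancel (show v + (q:ZMod n) = v + (j:ZMod n) from hjeq)).symm
      have hd : (n:ℤ) ∣ (j - q) := cast_eq_cast_iff.1 h2
      rcases int_dvd_cases hd (by omega) (by omega) (by omega) with h0 | hn
      · apply hpD
        apply hsub
        rw [heeq]
        exact mem_aset_intro p (by omega) (by omega)
      · apply hrD
        apply hsub
        rw [heeq]
        have hcast : v + ((r:ℤ) : ZMod n) = v + ((r - n : ℤ) : ZMod n) := by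
          push_cast; simp [ZMod.natCast_self]
        rw [hcast]
        exact mem_aset_intro (r - n) (by omega) (by omega)
  obtain ⟨i, hiC, hile⟩ := Int.exists_least_of_bdd
    (P := fun t : ℤ => 1 ≤ t ∧ t ≤ (n:ℤ) - 1 ∧ v + (t : ZMod n) ∉ ClosedNbhd E v)
    ⟨1, fun z hz => hz.1⟩ hCne
  obtain ⟨j, hjC, hjge⟩ := Int.exists_greatest_of_bdd
    (P := fun t : ℤ => 1 ≤ t ∧ t ≤ (n:ℤ) - 1 ∧ v + (t : ZMod n) ∉ ClosedNbhd E v)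
    ⟨(n:ℤ) - 1, fun z hz => hz.2.1⟩ hCne
  have hij : i ≤ j := hile j hjC
  have hi1 : 1 ≤ i := hiC.1
  have hjn : j ≤ (n:ℤ) - 1 := hjC.2.1
  have hmemiff : ∀ t : ℤ, 1 ≤ t → t ≤ (n:ℤ) - 1 →
      (v + (t:ZMod n) ∈ ClosedNbhd E v ↔ (t < i ∨ j < t)) := by
    intro t h1 h2
    constructor
    · intro hmem
      by_contra hc
      push_neg at hc
      exact (hconv i t j hiC hjC hc.1 hc.2).2.2 hmem
    · intro hc
      by_contra hnm
      have h3 := hile t ⟨h1, h2, hnm⟩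
      have h4 := hjge t ⟨h1, h2, hnm⟩
      omega
  refine ⟨v + ((j + 1 : ℤ) : ZMod n), i + n - 1 - j, by omega, by omega, ?_⟩
  have hre : aset n (v + ((j+1:ℤ):ZMod n)) 0 (i + n - 1 - j) = aset n v (j+1) (i+n) := by
    rw [aset_rebase]; congr 1 <;> ring
  rw [hre]
  ext b
  obtain ⟨t, ht0, htn, rfl⟩ := exists_rep v b
  constructor
  · intro hb
    rcases eq_or_lt_of_le ht0 with h0 | h0
    · rw [mem_aset]
      refine ⟨n, by omega, by omega, ?_⟩
      rw [← h0]
      push_cast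
      simp [ZMod.natCast_self]
    · rcases (hmemiff t (by omega) (by omega)).1 hb with h | h
      · rw [mem_aset]
        refine ⟨t + n, by omega, by omega, ?_⟩
        push_cast
        simp [ZMod.natCast_self]
      · exact mem_aset_intro t (by omega) (by omega)
  · intro hb
    rw [mem_aset] at hb
    obtain ⟨j', hj'1, hj'2, hj'eq⟩ := hb
    have h2 : ((t:ℤ):ZMod n) = ((j':ℤ):ZMod n) :=
      add_left_cancel (show v + (t:ZMod n) = v + (j':ZMod n) from hj'eq)
    have hd : (n:ℤ) ∣ (t - j') := cast_eq_cast_iff.1 h2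
    rcases int_dvd_cases hd (by omega) (by omega) (by omega) with h0 | hn
    · exact (hmemiff t (by omega) (by omega)).2 (Or.inr (by omega))
    · rcases eq_or_lt_of_le ht0 with h0' | h0'
      · have hveq : v + ((t:ℤ):ZMod n) = v := by rw [← h0']; norm_num
        rw [hveq]
        exact hvD
      · exact (hmemiff t (by omega) (by omega)).2 (Or.inl (by omega))

lemma key [NeZero n] {E : Set (Set (ZMod n))}
    (hred : ∀ e ∈ E, ∀ f ∈ E, e ⊆ f → e = f) (hconn : Conn E)
    (harc : ∀ e ∈ E, IsArc n e) :
    ∃ v : ZMod n, Relation.ReflTransGen (GoodStep E) (DomClosure E {v}) Set.univ := by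
  by_cases hD : DomClosure E {(0:ZMod n)} = Set.univ
  · exact ⟨0, hD ▸ Relation.ReflTransGen.refl⟩
  · rw [domClosure_singleton] at hD
    obtain ⟨b, hb⟩ := (ne_univ_iff_exists_notMem _).1 hD
    have hvb : (0:ZMod n) ≠ b := by
      rintro rfl
      exact hb (Or.inl rfl)
    obtain ⟨e, he, hve⟩ : ∃ e ∈ E, (0:ZMod n) ∈ e := by
      rcases (Relation.ReflTransGen.cases_head (hconn 0 b)) with heq | ⟨c, hnbr, -⟩
      · exact absurd heq hvb
      · obtain ⟨e, he, h0e, -⟩ := hnbr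
        exact ⟨e, he, h0e⟩
    obtain ⟨a, s, hs1, hsn, hDeq⟩ := start harc 0 hD
    refine ⟨0, ?_⟩
    rw [domClosure_singleton, hDeq]
    have hesub : e ⊆ aset n a 0 s := by
      rw [← hDeq]
      intro x hx
      exact Or.inr ⟨e, he, hve, hx⟩
    exact grow hred hconn harc ((n:ℤ) - s).toNat a s hs1 hsn ⟨e, he, hesub⟩ rfl

lemma goodstep_obs {V : Type*} {E : Set (Set V)} {S T : Set V} (h : GoodStep E S T) :
    ObsStep E S T := by
  obtain ⟨v, hv, e, he, hve, hc, hT⟩ := h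
  exact ⟨v, hv, e, he, hve, fun w hw hn => hc w hw hn, hT⟩

lemma goodstep_inf {V : Type*} {E : Set (Set V)} {S T : Set V} (h : GoodStep E S T) :
    InfStep E S T := by
  obtain ⟨v, hv, e, he, hve, hc, hT⟩ := h
  refine ⟨{v}, e, Set.singleton_nonempty v, Set.singleton_subset_iff.2 hv, he,
    Set.singleton_subset_iff.2 hve, ?_, hT⟩
  intro w hw hex
  obtain ⟨f, hf, hsub⟩ := hex
  exact hc w hw ⟨f, hf, hsub (Set.mem_insert_of_mem _ rfl), hsub (Set.mem_insert _ _)⟩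

lemma nbr_image {V W : Type*} (τ : V ≃ W) (E : Set (Set V)) {a b : V} :
    Nbr ((Set.image τ) '' E) (τ a) (τ b) ↔ Nbr E a b := by
  constructor
  · rintro ⟨e', ⟨e, he, rfl⟩, ha, hb⟩
    exact ⟨e, he, (τ.injective.mem_set_image).1 ha, (τ.injective.mem_set_image).1 hb⟩
  · rintro ⟨e, he, ha, hb⟩
    exact ⟨τ '' e, ⟨e, he, rfl⟩, Set.mem_image_of_mem _ ha, Set.mem_image_of_mem _ hb⟩

lemma goodstep_image {V W : Type*} (τ : V ≃ W) (E : Set (Set V)) {S T : Set V}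
    (h : GoodStep E S T) : GoodStep ((Set.image τ) '' E) (τ '' S) (τ '' T) := by
  obtain ⟨v, hvS, e, he, hve, hcond, rfl⟩ := h
  refine ⟨τ v, Set.mem_image_of_mem _ hvS, τ '' e, ⟨e, he, rfl⟩,
    Set.mem_image_of_mem _ hve, ?_, by rw [Set.image_union]⟩
  intro w hw hex
  obtain ⟨u, rfl⟩ := τ.surjective w
  have hu : u ∉ S := fun h => hw (Set.mem_image_of_mem _ h)
  obtain ⟨f', ⟨f, hf, rfl⟩, hvf, hwf⟩ := hex
  exact Set.mem_image_of_mem _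
    (hcond u hu ⟨f, hf, (τ.injective.mem_set_image).1 hvf, (τ.injective.mem_set_image).1 hwf⟩)

lemma closednbhd_image {V W : Type*} (τ : V ≃ W) (E : Set (Set V)) (v : V) :
    ClosedNbhd ((Set.image τ) '' E) (τ v) = τ '' ClosedNbhd E v := by
  ext w
  obtain ⟨u, rfl⟩ := τ.surjective w
  rw [τ.injective.mem_set_image]
  constructor
  · rintro (h | h)
    · exact Or.inl (τ.injective h)
    · exact Or.inr ((nbr_image τ E).1 h)
  · rintro (h | h)
    · exact Or.inl (by rw [h])
    · exact Or.inr ((nbr_image τ E).2 h)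

lemma domclosure_image {V W : Type*} (τ : V ≃ W) (E : Set (Set V)) (v : V) :
    DomClosure ((Set.image τ) '' E) {τ v} = τ '' DomClosure E {v} := by
  rw [domClosure_singleton, domClosure_singleton]
  exact closednbhd_image τ E v

lemma no_zero_start {V : Type*} [Fintype V] [Nonempty V] (E : Set (Set V))
    {step : Set V → Set V → Prop} (hstep : ∀ T, ¬ step ∅ T) {S₀ : Set V} (h0 : S₀.ncard = 0)
    (h : Relation.ReflTransGen step (DomClosure E S₀) Set.univ) : False := by
  have hS : S₀ = ∅ := (Set.ncard_eq_zero (Set.toFinite _)).1 h0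
  subst hS
  have hD : DomClosure E (∅ : Set V) = ∅ := by simp [DomClosure]
  rw [hD] at h
  rcases Relation.ReflTransGen.cases_head h with heq | ⟨c, hc, -⟩
  · exact Set.empty_ne_univ heq
  · exact hstep c hc

lemma obs_empty {V : Type*} {E : Set (Set V)} (T : Set V) : ¬ ObsStep E ∅ T := by
  rintro ⟨v, hv, -⟩
  exact hv

lemma inf_empty {V : Type*} {E : Set (Set V)} (T : Set V) : ¬ InfStep E ∅ T := by
  rintro ⟨A, e, ⟨a, ha⟩, hsub, -⟩
  exact hsub ha

lemma sInf_eq_one {A : Set ℕ} (h1 : 1 ∈ A) (h0 : 0 ∉ A) : sInf A = 1 := by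
  refine le_antisymm (Nat.sInf_le h1) (Nat.one_le_iff_ne_zero.2 ?_)
  intro h
  rcases Nat.sInf_eq_zero.1 h with hmem | hempty
  · exact h0 hmem
  · rw [hempty] at h1
    exact h1

end Stmt15Aux

theorem stmt15 {V : Type*} [Fintype V] [Nonempty V] (E : Set (Set V))
    (hred : ∀ e ∈ E, ∀ f ∈ E, e ⊆ f → e = f)
    (hconn : Conn E) (hne : E.Nonempty)
    (harc : ∃ σ : V ≃ ZMod (Fintype.card V),
      ∀ e ∈ E, IsArc (Fintype.card V) (σ '' e)) :
    gammaPI E = 1 ∧ gammaP E = 1 := by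
  classical
  set n := Fintype.card V with hn
  obtain ⟨σ, hσ⟩ := harc
  haveI : NeZero n := ⟨Fintype.card_pos.ne'⟩
  set E' : Set (Set (ZMod n)) := (Set.image σ) '' E with hE'
  have hred' : ∀ e ∈ E', ∀ f ∈ E', e ⊆ f → e = f := by
    rintro _ ⟨e, he, rfl⟩ _ ⟨f, hf, rfl⟩ hsub
    rw [hred e he f hf ((Set.image_subset_image_iff σ.injective).1 hsub)]
  have hconn' : Conn E' := by
    intro a b
    have h := Relation.ReflTransGen.lift (r := Nbr E) σ
      (fun x y hxy => (Stmt15Aux.nbr_image σ E).2 hxy) _ _ (hconn (σ.symm a) (σ.symm b))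
    simpa [Function.onFun] using h
  have harc' : ∀ e ∈ E', IsArc n e := by
    rintro _ ⟨e, he, rfl⟩
    exact hσ e he
  obtain ⟨v', hRTG⟩ := Stmt15Aux.key hred' hconn' harc'
  set v := σ.symm v' with hv
  have hpull := Relation.ReflTransGen.lift (r := Stmt15Aux.GoodStep E') (Set.image σ.symm)
    (fun S T h => Stmt15Aux.goodstep_image σ.symm E' h) _ _ hRTG
  have hEE : (Set.image σ.symm) '' E' = E := by
    rw [hE', ← Set.image_comp]
    have hcomp : (Set.image σ.symm) ∘ (Set.image σ) = id := by
      funext s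
      simp [Set.image_image]
    rw [hcomp, Set.image_id]
  have hDom : (Set.image σ.symm) (DomClosure E' {v'}) = DomClosure E {v} := by
    have h1 : v' = σ v := (σ.apply_symm_apply v').symm
    rw [h1, Stmt15Aux.domclosure_image σ E v]
    exact σ.symm_image_image _
  have huniv : (Set.image σ.symm) (Set.univ : Set (ZMod n)) = Set.univ := by
    simp [Set.image_univ]
  simp only [Function.onFun] at hpull
  rw [hEE, hDom, huniv] at hpull
  have hIPDS : IsIPDS E {v} :=
    Relation.ReflTransGen.mono (fun S T h => Stmt15Aux.goodstep_inf h) _ _ hpull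
  have hPDS : IsPDS E {v} :=
    Relation.ReflTransGen.mono (fun S T h => Stmt15Aux.goodstep_obs h) _ _ hpull
  constructor
  · apply Stmt15Aux.sInf_eq_one
    · exact ⟨{v}, Set.ncard_singleton v, hIPDS⟩
    · rintro ⟨S₀, h0, hI⟩
      exact Stmt15Aux.no_zero_start E Stmt15Aux.inf_empty h0 hI
  · apply Stmt15Aux.sInf_eq_one
    · exact ⟨{v}, Set.ncard_singleton v, hPDS⟩
    · rintro ⟨S₀, h0, hI⟩
      exact Stmt15Aux.no_zero_start E Stmt15Aux.obs_empty h0 hI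
end

section
/- Let H be a hypergraph and e an edge of H. Then γ_PI(H) − 1 ≤ γ_PI(H − e) ≤ γ_PI(H) + |e| − 1, where H − e denotes H with edge e removed (vertices retained). -/
open Set

section helpers
variable {V : Type*} {E : Set (Set V)} {e : Set V}

lemma mem_domClosure {S₀ : Set V} {b : V} :
    b ∈ DomClosure E S₀ ↔ ∃ v ∈ S₀, b ∈ ClosedNbhd E v := by
  simp [DomClosure]

lemma subset_domClosure (S₀ : Set V) : S₀ ⊆ DomClosure E S₀ :=
  fun v hv => mem_domClosure.mpr ⟨v, hv, Or.inl rfl⟩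

lemma domClosure_mono {S₀ S₁ : Set V} (h : S₀ ⊆ S₁) : DomClosure E S₀ ⊆ DomClosure E S₁ := by
  intro b hb
  obtain ⟨v, hv, hb⟩ := mem_domClosure.mp hb
  exact mem_domClosure.mpr ⟨v, h hv, hb⟩

lemma closedNbhd_mono {E' : Set (Set V)} (h : E' ⊆ E) (v : V) :
    ClosedNbhd E' v ⊆ ClosedNbhd E v := by
  rintro b (rfl | ⟨f, hf, h1, h2⟩)
  · exact Or.inl rfl
  · exact Or.inr ⟨f, h hf, h1, h2⟩

lemma domClosure_mono_edges {E' : Set (Set V)} (h : E' ⊆ E) (S₀ : Set V) :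
    DomClosure E' S₀ ⊆ DomClosure E S₀ := by
  intro b hb
  obtain ⟨v, hv, hb⟩ := mem_domClosure.mp hb
  exact mem_domClosure.mpr ⟨v, hv, closedNbhd_mono h v hb⟩

lemma domClosure_of_disj {S₀ : Set V} (h : S₀ ∩ e = ∅) :
    DomClosure E S₀ ⊆ DomClosure (E \ {e}) S₀ := by
  intro b hb
  obtain ⟨v, hv, rfl | ⟨f, hf, h1, h2⟩⟩ := mem_domClosure.mp hb
  · exact subset_domClosure S₀ hv
  · by_cases hfe : f = e
    · exact absurd (Set.mem_inter hv (hfe ▸ h1)) (by simp [h])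
    · exact mem_domClosure.mpr ⟨v, hv, Or.inr ⟨f, ⟨hf, hfe⟩, h1, h2⟩⟩

lemma e_subset_closedNbhd (he : e ∈ E) {v : V} (hv : v ∈ e) : e ⊆ ClosedNbhd E v :=
  fun b hb => Or.inr ⟨e, he, hv, hb⟩

/-- Simulation: a run of `E \ {e}` can be followed in `E` from a superset containing `e`. -/
lemma sim1 (he : e ∈ E) :
    ∀ S : Set V, Relation.ReflTransGen (InfStep (E \ {e})) S Set.univ →
    ∀ S' : Set V, S ⊆ S' → e ⊆ S' →
    Relation.ReflTransGen (InfStep E) S' Set.univ := by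
  intro S h
  induction h using Relation.ReflTransGen.head_induction_on with
  | refl =>
    intro S' hS' _
    rw [Set.eq_univ_of_univ_subset hS']
  | head hstep htail ih =>
    intro S' hSS' heS'
    obtain ⟨A, e₀, hAne, hAS, he₀, hAe₀, hcond, rfl⟩ := hstep
    refine Relation.ReflTransGen.head
      ⟨A, e₀, hAne, hAS.trans hSS', he₀.1, hAe₀, ?_, rfl⟩
      (ih (S' ∪ e₀) (Set.union_subset_union_left _ hSS') (heS'.trans Set.subset_union_left))
    intro w hw hf
    obtain ⟨f, hfE, hwf⟩ := hf
    by_cases hfe : f = e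
    · exact absurd (heS' (hfe ▸ hwf (Set.mem_insert w A))) hw
    · exact hcond w (fun hwS => hw (hSS' hwS)) ⟨f, ⟨hfE, hfe⟩, hwf⟩

/-- Simulation: a run of `E` can be followed in `E \ {e}` from a superset containing `e`. -/
lemma sim2 :
    ∀ S : Set V, Relation.ReflTransGen (InfStep E) S Set.univ →
    ∀ S' : Set V, S ⊆ S' → e ⊆ S' →
    Relation.ReflTransGen (InfStep (E \ {e})) S' Set.univ := by
  intro S h
  induction h using Relation.ReflTransGen.head_induction_on with
  | refl =>
    intro S' hS' _
    rw [Set.eq_univ_of_univ_subset hS']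
  | head hstep htail ih =>
    intro S' hSS' heS'
    obtain ⟨A, e₀, hAne, hAS, he₀, hAe₀, hcond, rfl⟩ := hstep
    by_cases h₀ : e₀ = e
    · exact ih S' (by subst h₀; exact Set.union_subset hSS' heS') heS'
    · refine Relation.ReflTransGen.head
        ⟨A, e₀, hAne, hAS.trans hSS', ⟨he₀, h₀⟩, hAe₀, ?_, rfl⟩
        (ih (S' ∪ e₀) (Set.union_subset_union_left _ hSS') (heS'.trans Set.subset_union_left))
      intro w hw hf
      obtain ⟨f, hfE, hwf⟩ := hf
      exact hcond w (fun hwS => hw (hSS' hwS)) ⟨f, hfE.1, hwf⟩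

/-- Key lemma: if the current infected set misses `e`, some vertex `u` of `e` can be
spared: any superset containing `e \ {u}` completes the infection in `E \ {e}`. -/
lemma lemC (hene : e.Nonempty) :
    ∀ S : Set V, Relation.ReflTransGen (InfStep E) S Set.univ →
    S ∩ e = ∅ →
    ∃ u ∈ e, ∀ S' : Set V, S ⊆ S' → e \ {u} ⊆ S' →
      Relation.ReflTransGen (InfStep (E \ {e})) S' Set.univ := by
  intro S₁ h
  induction h using Relation.ReflTransGen.head_induction_on with
  | refl =>
    intro hS
    obtain ⟨u, hu⟩ := hene
    exact absurd (Set.mem_inter (Set.mem_univ u) hu) (by simp [hS])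
  | @head S T hstep htail ih =>
    intro hS
    obtain ⟨A, e₀, hAne, hAS, he₀, hAe₀, hcond, rfl⟩ := hstep
    have h₀ : e₀ ≠ e := by
      rintro rfl
      obtain ⟨a, ha⟩ := hAne
      exact absurd (Set.mem_inter (hAS ha) (hAe₀ ha)) (by simp [hS])
    have hstep' : ∀ S' : Set V, S ⊆ S' → InfStep (E \ {e}) S' (S' ∪ e₀) := by
      intro S' hSS'
      refine ⟨A, e₀, hAne, hAS.trans hSS', ⟨he₀, h₀⟩, hAe₀, ?_, rfl⟩
      intro w hw hf
      obtain ⟨f, hfE, hwf⟩ := hf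
      exact hcond w (fun hwS => hw (hSS' hwS)) ⟨f, hfE.1, hwf⟩
    by_cases hTe : (S ∪ e₀) ∩ e = ∅
    · obtain ⟨u, hu, hP⟩ := ih hTe
      refine ⟨u, hu, fun S' hSS' heS' => ?_⟩
      exact Relation.ReflTransGen.head (hstep' S' hSS')
        (hP (S' ∪ e₀) (Set.union_subset_union_left _ hSS') (heS'.trans Set.subset_union_left))
    · obtain ⟨u, huT, hue⟩ := Set.nonempty_iff_ne_empty.mpr hTe
      refine ⟨u, hue, fun S' hSS' heS' => ?_⟩
      refine Relation.ReflTransGen.head (hstep' S' hSS') ?_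
      apply sim2 _ htail (S' ∪ e₀) (Set.union_subset_union_left _ hSS')
      intro b hb
      by_cases hbu : b = u
      · subst hbu
        rcases huT with h | h
        · exact absurd (Set.mem_inter h hue) (by simp [hS])
        · exact Or.inr h
      · exact Or.inl (heS' ⟨hb, hbu⟩)

lemma nonempty_gammaSet (E : Set (Set V)) :
    {n | ∃ S₀ : Set V, S₀.ncard = n ∧ IsIPDS E S₀}.Nonempty := by
  refine ⟨(Set.univ : Set V).ncard, Set.univ, rfl, ?_⟩
  unfold IsIPDS
  rw [Set.eq_univ_of_univ_subset (subset_domClosure Set.univ)]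

lemma size_lemma [Fintype V] {S₀ : Set V} {u : V} (hu : u ∈ e) :
    (S₀ ∪ (e \ {u})).ncard ≤ S₀.ncard + (e.ncard - 1) := by
  calc (S₀ ∪ (e \ {u})).ncard ≤ S₀.ncard + (e \ {u}).ncard := Set.ncard_union_le _ _
    _ = S₀.ncard + (e.ncard - 1) := by rw [Set.ncard_diff_singleton_of_mem hu]

end helpers

theorem stmt16 {V : Type*} [Fintype V] (E : Set (Set V))
    (e : Set V) (he : e ∈ E) (hene : e.Nonempty) :
    gammaPI E ≤ gammaPI (E \ {e}) + 1 ∧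
    gammaPI (E \ {e}) ≤ gammaPI E + (e.ncard - 1) := by
  constructor
  · -- γ_PI(E) ≤ γ_PI(E \ {e}) + 1
    obtain ⟨S₀, hcard, hIPDS⟩ := Nat.sInf_mem (nonempty_gammaSet (E \ {e}))
    obtain ⟨v, hv⟩ := hene
    have hI : IsIPDS E (insert v S₀) := by
      apply sim1 he _ hIPDS
      · exact ((domClosure_mono_edges Set.diff_subset S₀).trans
          (domClosure_mono (Set.subset_insert v S₀)))
      · exact (e_subset_closedNbhd he hv).trans
          (fun b hb => mem_domClosure.mpr ⟨v, Set.mem_insert v S₀, hb⟩)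
    calc gammaPI E ≤ (insert v S₀).ncard := Nat.sInf_le ⟨insert v S₀, rfl, hI⟩
      _ ≤ S₀.ncard + 1 := Set.ncard_insert_le v S₀
      _ = gammaPI (E \ {e}) + 1 := by rw [hcard]; rfl
  · -- γ_PI(E \ {e}) ≤ γ_PI(E) + |e| - 1
    obtain ⟨S₀, hcard, hIPDS⟩ := Nat.sInf_mem (nonempty_gammaSet E)
    have key : ∃ u ∈ e, IsIPDS (E \ {e}) (S₀ ∪ (e \ {u})) := by
      by_cases h0 : S₀ ∩ e = ∅
      · by_cases h1 : DomClosure E S₀ ∩ e = ∅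
        · obtain ⟨u, hu, hP⟩ := lemC hene _ hIPDS h1
          refine ⟨u, hu, hP _ ?_ ?_⟩
          · exact (domClosure_of_disj h0).trans
              (domClosure_mono Set.subset_union_left)
          · exact Set.subset_union_right.trans (subset_domClosure _)
        · obtain ⟨u, huD, hue⟩ := Set.nonempty_iff_ne_empty.mpr h1
          refine ⟨u, hue, sim2 _ hIPDS _ ?_ ?_⟩
          · exact (domClosure_of_disj h0).trans
              (domClosure_mono Set.subset_union_left)
          · intro b hb
            by_cases hbu : b = u
            · subst hbu
              obtain ⟨w, hw, rfl | ⟨f, hf, h1', h2'⟩⟩ := mem_domClosure.mp huD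
              · exact subset_domClosure _ (Or.inl hw)
              · have hfe : f ≠ e := fun h => by
                  exact absurd (Set.mem_inter hw (h ▸ h1')) (by simp [h0])
                exact mem_domClosure.mpr ⟨w, Or.inl hw, Or.inr ⟨f, ⟨hf, hfe⟩, h1', h2'⟩⟩
            · exact subset_domClosure _ (Or.inr ⟨hb, hbu⟩)
      · obtain ⟨u, huS, hue⟩ := Set.nonempty_iff_ne_empty.mpr h0
        have heq : S₀ ∪ (e \ {u}) = S₀ ∪ e := by
          ext b
          constructor
          · rintro (h | ⟨h, _⟩)
            · exact Or.inl h
            · exact Or.inr h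
          · rintro (h | h)
            · exact Or.inl h
            · by_cases hbu : b = u
              · exact Or.inl (hbu ▸ huS)
              · exact Or.inr ⟨h, hbu⟩
        refine ⟨u, hue, sim2 _ hIPDS _ ?_ ?_⟩
        · intro b hb
          obtain ⟨w, hw, rfl | ⟨f, hf, h1', h2'⟩⟩ := mem_domClosure.mp hb
          · exact subset_domClosure _ (Or.inl hw)
          · by_cases hfe : f = e
            · exact subset_domClosure _ (by rw [heq]; exact Or.inr (hfe ▸ h2'))
            · exact mem_domClosure.mpr ⟨w, Or.inl hw, Or.inr ⟨f, ⟨hf, hfe⟩, h1', h2'⟩⟩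
        · exact (by rw [heq]; exact Set.subset_union_right :
            e ⊆ S₀ ∪ (e \ {u})).trans (subset_domClosure _)
    obtain ⟨u, hu, hI⟩ := key
    calc gammaPI (E \ {e}) ≤ (S₀ ∪ (e \ {u})).ncard := Nat.sInf_le ⟨_, rfl, hI⟩
      _ ≤ S₀.ncard + (e.ncard - 1) := size_lemma hu
      _ = gammaPI E + (e.ncard - 1) := by rw [hcard]; rfl
end

section
/- If H₁ and H₂ are connected hypergraphs (each with at least one edge) and the infectious power domination number of H₁ equals 1, then the infectious power domination number of the linear sum H₁ ⋆ H₂ equals 1. -/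
open Set

/-- The linear sum of two hypergraphs on disjoint vertex sets: edges are unions of
one edge from each. -/
def linSum {V₁ V₂ : Type*} (E₁ : Set (Set V₁)) (E₂ : Set (Set V₂)) :
    Set (Set (V₁ ⊕ V₂)) :=
  {e | ∃ e₁ ∈ E₁, ∃ e₂ ∈ E₂, e = Sum.inl '' e₁ ∪ Sum.inr '' e₂}


/-- In a connected hypergraph with a nonempty edge, every vertex lies in some edge. -/
lemma mem_some_edge {V : Type*} {E : Set (Set V)} (hc : Conn E)
    (hne : E.Nonempty) (hv : ∀ e ∈ E, e.Nonempty) (u : V) : ∃ e ∈ E, u ∈ e := by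
  obtain ⟨e₀, he₀⟩ := hne
  obtain ⟨w, hw⟩ := hv e₀ he₀
  rcases (hc u w).cases_head with h | ⟨c, ⟨e, he, hu, _⟩, _⟩
  · exact ⟨e₀, he₀, h ▸ hw⟩
  · exact ⟨e, he, hu⟩

lemma transfer_step {V₁ V₂ : Type*} {E₁ : Set (Set V₁)} {E₂ : Set (Set V₂)}
    (hne₂ : E₂.Nonempty) {S T : Set V₁} (h : InfStep E₁ S T) :
    InfStep (linSum E₁ E₂) (Sum.inl '' S ∪ Set.range Sum.inr)
      (Sum.inl '' T ∪ Set.range Sum.inr) := by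
  obtain ⟨A, e, hA, hAS, heE, hAe, hcond, hT⟩ := h
  obtain ⟨e₂, he₂⟩ := hne₂
  refine ⟨Sum.inl '' A, Sum.inl '' e ∪ Sum.inr '' e₂, hA.image _,
    (Set.image_mono hAS).trans (Set.subset_union_left),
    ⟨e, heE, e₂, he₂, rfl⟩,
    (Set.image_mono hAe).trans (Set.subset_union_left), ?_, ?_⟩
  · rintro w hw ⟨f, ⟨f₁, hf₁, f₂, hf₂, rfl⟩, hwf⟩
    obtain (u | u) := w
    · have hu : u ∉ S := fun h => hw (Or.inl ⟨u, h, rfl⟩)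
      have hins : insert u A ⊆ f₁ := by
        intro x hx
        have : Sum.inl x ∈ Sum.inl '' f₁ ∪ Sum.inr '' f₂ := by
          apply hwf
          rcases hx with rfl | hx
          · exact Set.mem_insert _ _
          · exact Set.mem_insert_of_mem _ ⟨x, hx, rfl⟩
        rcases this with ⟨y, hy, hyx⟩ | ⟨y, hy, hyx⟩
        · cases hyx; exact hy
        · exact absurd hyx (by simp)
      exact Or.inl ⟨u, hcond u hu ⟨f₁, hf₁, hins⟩, rfl⟩
    · exact absurd (Or.inr ⟨u, rfl⟩) hw
  · rw [hT, Set.image_union]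
    have : (Sum.inr '' e₂ : Set (V₁ ⊕ V₂)) ⊆ Set.range Sum.inr := Set.image_subset_range _ _
    ext x
    simp only [Set.mem_union]
    have hx2 : x ∈ Sum.inr '' e₂ → x ∈ Set.range Sum.inr := fun h => this h
    tauto

lemma transfer {V₁ V₂ : Type*} {E₁ : Set (Set V₁)} {E₂ : Set (Set V₂)}
    (hne₂ : E₂.Nonempty) {S T : Set V₁} (h : Relation.ReflTransGen (InfStep E₁) S T) :
    Relation.ReflTransGen (InfStep (linSum E₁ E₂))
      (Sum.inl '' S ∪ Set.range Sum.inr) (Sum.inl '' T ∪ Set.range Sum.inr) := by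
  induction h with
  | refl => exact Relation.ReflTransGen.refl
  | tail _ hstep ih => exact ih.tail (transfer_step hne₂ hstep)

theorem stmt18 {V₁ V₂ : Type*} [Fintype V₁] [Fintype V₂]
    (E₁ : Set (Set V₁)) (E₂ : Set (Set V₂))
    (hc₁ : Conn E₁) (hc₂ : Conn E₂)
    (hne₁ : E₁.Nonempty) (hne₂ : E₂.Nonempty)
    (hv₁ : ∀ e ∈ E₁, e.Nonempty) (hv₂ : ∀ e ∈ E₂, e.Nonempty)
    (h1 : gammaPI E₁ = 1) :
    gammaPI (linSum E₁ E₂) = 1 := by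
  -- every vertex of V₁ / V₂ is in some edge
  have hE₁all : ∀ u : V₁, ∃ e ∈ E₁, u ∈ e := mem_some_edge hc₁ hne₁ hv₁
  have hE₂all : ∀ u : V₂, ∃ e ∈ E₂, u ∈ e := mem_some_edge hc₂ hne₂ hv₂
  -- extract a singleton IPDS of E₁
  have hSne : {n | ∃ S₀ : Set V₁, S₀.ncard = n ∧ IsIPDS E₁ S₀}.Nonempty := by
    by_contra h
    rw [Set.not_nonempty_iff_eq_empty] at h
    rw [gammaPI, h, Nat.sInf_empty] at h1
    exact absurd h1 (by norm_num)
  have hmem := Nat.sInf_mem hSne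
  rw [show sInf {n | ∃ S₀ : Set V₁, S₀.ncard = n ∧ IsIPDS E₁ S₀} = gammaPI E₁ from rfl,
    h1] at hmem
  obtain ⟨S₀, hcard, hipds⟩ := hmem
  obtain ⟨v, rfl⟩ := Set.ncard_eq_one.mp hcard
  -- key equality of initial observed sets
  have hdom₁ : DomClosure E₁ {v} = ClosedNbhd E₁ v := by
    simp [DomClosure]
  have hdom : DomClosure (linSum E₁ E₂) {Sum.inl v}
      = Sum.inl '' (DomClosure E₁ {v}) ∪ Set.range Sum.inr := by
    rw [hdom₁]
    have hvedge := hE₁all v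
    ext b
    simp only [DomClosure, Set.mem_iUnion, Set.mem_singleton_iff, exists_prop,
      exists_eq_left]
    obtain (u | w) := b
    · constructor
      · rintro (h | ⟨e, ⟨e₁, he₁, e₂, he₂, rfl⟩, hv, hu⟩)
        · cases h; exact Or.inl ⟨v, Or.inl rfl, rfl⟩
        · rcases hv with ⟨y, hy, hyx⟩ | ⟨y, hy, hyx⟩
          · cases hyx
            rcases hu with ⟨z, hz, hzx⟩ | ⟨z, hz, hzx⟩
            · cases hzx
              exact Or.inl ⟨u, Or.inr ⟨e₁, he₁, hy, hz⟩, rfl⟩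
            · exact absurd hzx (by simp)
          · exact absurd hyx (by simp)
      · rintro (⟨y, hy, hyx⟩ | ⟨y, hyx⟩)
        · cases hyx
          rcases hy with rfl | ⟨e₁, he₁, hv1, hu1⟩
          · exact Or.inl rfl
          · obtain ⟨e₂, he₂⟩ := hne₂
            exact Or.inr ⟨_, ⟨e₁, he₁, e₂, he₂, rfl⟩,
              Or.inl ⟨v, hv1, rfl⟩, Or.inl ⟨u, hu1, rfl⟩⟩
        · exact absurd hyx (by simp)
    · constructor
      · intro _; exact Or.inr ⟨w, rfl⟩
      · intro _
        obtain ⟨e₁, he₁, hv1⟩ := hvedge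
        obtain ⟨e₂, he₂, hw2⟩ := hE₂all w
        exact Or.inr ⟨_, ⟨e₁, he₁, e₂, he₂, rfl⟩,
          Or.inl ⟨v, hv1, rfl⟩, Or.inr ⟨w, hw2, rfl⟩⟩
  -- {inl v} is an IPDS of the linear sum
  have hipds' : IsIPDS (linSum E₁ E₂) {Sum.inl v} := by
    unfold IsIPDS
    rw [hdom]
    have hfin : Sum.inl '' (Set.univ : Set V₁) ∪ Set.range Sum.inr
        = (Set.univ : Set (V₁ ⊕ V₂)) := by
      ext x
      obtain (u | w) := x
      · simp
      · simp
    have := transfer (E₁ := E₁) (E₂ := E₂) hne₂ hipds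
    rwa [hfin] at this
  have h1mem : (1 : ℕ) ∈ {n | ∃ S₀ : Set (V₁ ⊕ V₂), S₀.ncard = n ∧ IsIPDS (linSum E₁ E₂) S₀} :=
    ⟨{Sum.inl v}, Set.ncard_singleton _, hipds'⟩
  have h0not : (0 : ℕ) ∉ {n | ∃ S₀ : Set (V₁ ⊕ V₂), S₀.ncard = n ∧ IsIPDS (linSum E₁ E₂) S₀} := by
    rintro ⟨S₀, hc0, hip⟩
    have hS0 : S₀ = ∅ := (Set.ncard_eq_zero S₀.toFinite).mp hc0
    subst hS0
    have hdc : DomClosure (linSum E₁ E₂) (∅ : Set (V₁ ⊕ V₂)) = ∅ := by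
      simp [DomClosure]
    rw [IsIPDS, hdc] at hip
    rcases hip.cases_head with h | ⟨c, ⟨A, e, hA, hAS, _⟩, _⟩
    · obtain ⟨e₁, he₁⟩ := hne₁
      obtain ⟨x, hx⟩ := hv₁ e₁ he₁
      have : Sum.inl x ∈ (∅ : Set (V₁ ⊕ V₂)) := h ▸ Set.mem_univ _
      exact this
    · obtain ⟨a, ha⟩ := hA
      exact hAS ha
  unfold gammaPI
  refine le_antisymm (Nat.sInf_le h1mem) ?_
  rw [Nat.one_le_iff_ne_zero]
  intro h0
  rcases Nat.sInf_eq_zero.mp h0 with h | h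
  · exact h0not h
  · rw [h] at h1mem; exact h1mem
end

section
/- Let G be a k-uniform hypergraph and H a (k−1)-uniform hypergraph with at least two edges, each with at least one edge. Then the infectious power domination number, the power domination number, and the domination number of the weak corona G ∘_w H all equal |V(G)|. -/
open Set

/-- The weak corona `G ∘_w H`: a disjoint copy of `H` for each vertex `v` of `G`,
each edge of the copy enlarged by `v`. -/
def weakCorona {VG VH : Type*} (EG : Set (Set VG)) (EH : Set (Set VH)) :
    Set (Set (VG ⊕ VG × VH)) :=
  {e | (∃ g ∈ EG, e = Sum.inl '' g) ∨
    (∃ v : VG, ∃ h ∈ EH, e = insert (Sum.inl v) ((fun x => Sum.inr (v, x)) '' h))}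


set_option linter.unusedSectionVars false

section Aux

variable {VG VH : Type*} [Fintype VG] [Fintype VH] {k : ℕ}
  {EG : Set (Set VG)} {EH : Set (Set VH)}

/-- Classification: an edge of the weak corona containing a copy-vertex `inr (v, x)`
is a corona edge of the copy at `v`. -/
lemma corona_classify {e : Set (VG ⊕ VG × VH)} (he : e ∈ weakCorona EG EH)
    {v : VG} {x : VH} (hx : Sum.inr (v, x) ∈ e) :
    ∃ h ∈ EH, e = insert (Sum.inl v) ((fun y => Sum.inr (v, y)) '' h) := by
  rcases he with ⟨g, _, rfl⟩ | ⟨v', h, hh, rfl⟩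
  · rcases hx with ⟨a, _, ha⟩
    exact absurd ha (by simp)
  · rcases hx with hx | ⟨y, hy, hxy⟩
    · exact absurd hx (by simp)
    · obtain ⟨rfl, rfl⟩ : v' = v ∧ y = x := by
        have := Sum.inr.inj hxy
        exact ⟨congrArg Prod.fst this, congrArg Prod.snd this⟩
      exact ⟨h, hh, rfl⟩

/-- No corona edge of the copy at `v` contains the whole copy. -/
lemma no_full_copy (hHk : ∀ e ∈ EH, e.ncard = k - 1) (hH : 2 ≤ EH.ncard)
    {v : VG} {h : Set VH} (hh : h ∈ EH)
    (hall : ∀ x : VH, Sum.inr (v, x) ∈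
      insert (Sum.inl v) ((fun y => Sum.inr (v, y)) '' h)) : False := by
  obtain ⟨h₁, hh₁, h₂, hh₂, hne⟩ := (Set.one_lt_ncard (EH.toFinite)).1 (by omega)
  have huniv : h = Set.univ := by
    apply Set.eq_univ_of_forall
    intro x
    rcases hall x with hx | ⟨y, hy, hxy⟩
    · exact absurd hx (by simp)
    · have : y = x := congrArg Prod.snd (Sum.inr.inj hxy)
      exact this ▸ hy
  have key : ∀ h' ∈ EH, h' = h := by
    intro h' hh'
    apply Set.eq_of_subset_of_ncard_le (huniv ▸ Set.subset_univ h')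
    rw [hHk h' hh', hHk h hh]
  exact hne ((key h₁ hh₁).trans (key h₂ hh₂).symm)

/-- Preservation of an invariant along a reflexive-transitive closure. -/
lemma rtg_pres {α : Type*} {r : α → α → Prop} {P : α → Prop}
    (hpres : ∀ {a b}, P a → r a b → P b) {a b : α}
    (h : Relation.ReflTransGen r a b) (ha : P a) : P b := by
  induction h with
  | refl => exact ha
  | tail _ hstep ih => exact hpres ih hstep

/-- Projection onto the `G`-vertex coordinate. -/
def cproj : (VG ⊕ VG × VH) → VG := Sum.elim id Prod.fst

/-- If no copy-`v` vertex is observed, an infection step keeps it so. -/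
lemma inf_step_invariant (hHk : ∀ e ∈ EH, e.ncard = k - 1) (hH : 2 ≤ EH.ncard)
    (hiso : ∀ x : VH, ∃ e ∈ EH, x ∈ e) {v : VG} {S T : Set (VG ⊕ VG × VH)}
    (hP : ∀ x : VH, Sum.inr (v, x) ∉ S) (hst : InfStep (weakCorona EG EH) S T) :
    ∀ x : VH, Sum.inr (v, x) ∉ T := by
  obtain ⟨A, e, hA, hAS, he, hAe, hcond, rfl⟩ := hst
  intro x hx
  rcases hx with hx | hx
  · exact hP x hx
  obtain ⟨h, hh, rfl⟩ := corona_classify he hx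
  have hAsub : A ⊆ {Sum.inl v} := by
    intro a ha
    rcases hAe ha with rfl | ⟨y, _, hay⟩
    · exact rfl
    · subst hay
      exact absurd (hAS ha) (hP y)
  apply no_full_copy (v := v) hHk hH hh
  intro x'
  apply hcond _ (hP x')
  obtain ⟨h', hh', hx'⟩ := hiso x'
  refine ⟨insert (Sum.inl v) ((fun y => Sum.inr (v, y)) '' h'), Or.inr ⟨v, h', hh', rfl⟩, ?_⟩
  intro a ha
  rcases ha with rfl | ha
  · exact Or.inr ⟨x', hx', rfl⟩
  · exact (hAsub ha) ▸ Or.inl rfl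

/-- If no copy-`v` vertex is observed, an observation step keeps it so. -/
lemma obs_step_invariant (hHk : ∀ e ∈ EH, e.ncard = k - 1) (hH : 2 ≤ EH.ncard)
    (hiso : ∀ x : VH, ∃ e ∈ EH, x ∈ e) {v : VG} {S T : Set (VG ⊕ VG × VH)}
    (hP : ∀ x : VH, Sum.inr (v, x) ∉ S) (hst : ObsStep (weakCorona EG EH) S T) :
    ∀ x : VH, Sum.inr (v, x) ∉ T := by
  obtain ⟨u, hu, e, he, hue, hcond, rfl⟩ := hst
  intro x hx
  rcases hx with hx | hx
  · exact hP x hx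
  obtain ⟨h, hh, rfl⟩ := corona_classify he hx
  have huv : u = Sum.inl v := by
    rcases hue with rfl | ⟨y, _, huy⟩
    · rfl
    · subst huy
      exact absurd hu (hP y)
  apply no_full_copy (v := v) hHk hH hh
  intro x'
  apply hcond _ (hP x')
  obtain ⟨h', hh', hx'⟩ := hiso x'
  exact ⟨insert (Sum.inl v) ((fun y => Sum.inr (v, y)) '' h'), Or.inr ⟨v, h', hh', rfl⟩,
    huv ▸ Or.inl rfl, Or.inr ⟨x', hx', rfl⟩⟩

/-- If `S₀` misses the closed copy at `v`, then so does the domination closure,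
as far as copy vertices are concerned. -/
lemma dom_closure_invariant {v : VG} {S₀ : Set (VG ⊕ VG × VH)}
    (h0 : ∀ s ∈ S₀, cproj s ≠ v) :
    ∀ x : VH, Sum.inr (v, x) ∉ DomClosure (weakCorona EG EH) S₀ := by
  intro x hx
  rw [DomClosure, Set.mem_iUnion₂] at hx
  obtain ⟨d, hd, hmem⟩ := hx
  rcases hmem with heq | ⟨e, he, hde, hxe⟩
  · subst heq
    exact h0 _ hd rfl
  · obtain ⟨h, hh, rfl⟩ := corona_classify he hxe
    rcases hde with rfl | ⟨y, _, hdy⟩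
    · exact h0 _ hd rfl
    · exact h0 d hd (by rw [← hdy]; rfl)

/-- There is a vertex of `VH`. -/
lemma vh_nonempty (hHk : ∀ e ∈ EH, e.ncard = k - 1) (hH : 2 ≤ EH.ncard) :
    Nonempty VH := by
  obtain ⟨h₁, hh₁, h₂, hh₂, hne⟩ := (Set.one_lt_ncard (EH.toFinite)).1 (by omega)
  by_contra hemp
  have hempty : ∀ h : Set VH, h = ∅ := fun h =>
    Set.eq_empty_of_forall_notMem (fun x _ => hemp ⟨x⟩)
  exact hne ((hempty h₁).trans (hempty h₂).symm)

/-- Any set meeting every copy has at least `|V(G)|` elements. -/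
lemma card_le_of_hits (S : Set (VG ⊕ VG × VH))
    (hhit : ∀ v : VG, ∃ s ∈ S, cproj s = v) : Fintype.card VG ≤ S.ncard := by
  choose g hgS hgp using hhit
  have hginj : Function.Injective g := by
    intro a b hab
    rw [← hgp a, ← hgp b, hab]
  calc Fintype.card VG = (Set.univ : Set VG).ncard := by
        rw [Set.ncard_univ, Nat.card_eq_fintype_card]
    _ = (g '' Set.univ).ncard := (Set.ncard_image_of_injective _ hginj).symm
    _ ≤ S.ncard := Set.ncard_le_ncard (by rintro _ ⟨a, _, rfl⟩; exact hgS a) S.toFinite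

/-- An IPDS of the weak corona hits every copy. -/
lemma ipds_hits (hHk : ∀ e ∈ EH, e.ncard = k - 1) (hH : 2 ≤ EH.ncard)
    (hiso : ∀ x : VH, ∃ e ∈ EH, x ∈ e) {S₀ : Set (VG ⊕ VG × VH)}
    (hS : IsIPDS (weakCorona EG EH) S₀) : ∀ v : VG, ∃ s ∈ S₀, cproj s = v := by
  intro v
  by_contra hc
  push_neg at hc
  have hP0 := dom_closure_invariant (EG := EG) (EH := EH) (v := v) hc
  have hinv : ∀ x : VH, Sum.inr (v, x) ∉ (Set.univ : Set (VG ⊕ VG × VH)) :=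
    rtg_pres (fun hp hs => inf_step_invariant hHk hH hiso hp hs) hS hP0
  obtain ⟨x⟩ := vh_nonempty hHk hH
  exact hinv x (Set.mem_univ _)

/-- A PDS of the weak corona hits every copy. -/
lemma pds_hits (hHk : ∀ e ∈ EH, e.ncard = k - 1) (hH : 2 ≤ EH.ncard)
    (hiso : ∀ x : VH, ∃ e ∈ EH, x ∈ e) {S₀ : Set (VG ⊕ VG × VH)}
    (hS : IsPDS (weakCorona EG EH) S₀) : ∀ v : VG, ∃ s ∈ S₀, cproj s = v := by
  intro v
  by_contra hc
  push_neg at hc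
  have hP0 := dom_closure_invariant (EG := EG) (EH := EH) (v := v) hc
  have hinv : ∀ x : VH, Sum.inr (v, x) ∉ (Set.univ : Set (VG ⊕ VG × VH)) :=
    rtg_pres (fun hp hs => obs_step_invariant hHk hH hiso hp hs) hS hP0
  obtain ⟨x⟩ := vh_nonempty hHk hH
  exact hinv x (Set.mem_univ _)

/-- A dominating set of the weak corona hits every copy. -/
lemma dom_hits (hHk : ∀ e ∈ EH, e.ncard = k - 1) (hH : 2 ≤ EH.ncard)
    {D : Set (VG ⊕ VG × VH)} (hD : IsDomSet (weakCorona EG EH) D) :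
    ∀ v : VG, ∃ s ∈ D, cproj s = v := by
  intro v
  obtain ⟨x⟩ := vh_nonempty (EH := EH) hHk hH
  obtain ⟨d, hd, hmem⟩ := hD (Sum.inr (v, x))
  rcases hmem with heq | ⟨e, he, hde, hxe⟩
  · subst heq
    exact ⟨_, hd, rfl⟩
  · obtain ⟨h, hh, rfl⟩ := corona_classify he hxe
    rcases hde with rfl | ⟨y, _, hdy⟩
    · exact ⟨_, hd, rfl⟩
    · exact ⟨d, hd, by rw [← hdy]; rfl⟩

/-- The set of all `G`-vertices dominates everything. -/
lemma dom_closure_range_inl (hiso : ∀ x : VH, ∃ e ∈ EH, x ∈ e) :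
    DomClosure (weakCorona EG EH) (Set.range (Sum.inl : VG → VG ⊕ VG × VH)) =
      Set.univ := by
  apply Set.eq_univ_of_forall
  intro w
  rw [DomClosure, Set.mem_iUnion₂]
  cases w with
  | inl v => exact ⟨Sum.inl v, Set.mem_range_self v, Or.inl rfl⟩
  | inr p =>
    obtain ⟨v, x⟩ := p
    obtain ⟨h, hh, hx⟩ := hiso x
    exact ⟨Sum.inl v, Set.mem_range_self v,
      Or.inr ⟨insert (Sum.inl v) ((fun y => Sum.inr (v, y)) '' h),
        Or.inr ⟨v, h, hh, rfl⟩, Or.inl rfl, Or.inr ⟨x, hx, rfl⟩⟩⟩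

lemma ncard_range_inl :
    (Set.range (Sum.inl : VG → VG ⊕ VG × VH)).ncard = Fintype.card VG := by
  rw [← Set.image_univ, Set.ncard_image_of_injective _ Sum.inl_injective,
    Set.ncard_univ, Nat.card_eq_fintype_card]

end Aux

theorem stmt19 {VG VH : Type*} [Fintype VG] [Fintype VH] (k : ℕ)
    (EG : Set (Set VG)) (EH : Set (Set VH))
    (hGk : ∀ e ∈ EG, e.ncard = k) (hHk : ∀ e ∈ EH, e.ncard = k - 1)
    (hG : EG.Nonempty) (hH : 2 ≤ EH.ncard)
    (hiso : ∀ h : VH, ∃ e ∈ EH, h ∈ e) :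
    gammaPI (weakCorona EG EH) = Fintype.card VG ∧
    gammaP (weakCorona EG EH) = Fintype.card VG ∧
    gammaDom (weakCorona EG EH) = Fintype.card VG := by
  have hiso' : ∀ x : VH, ∃ e ∈ EH, x ∈ e := hiso
  have hdc := dom_closure_range_inl (EG := EG) hiso'
  have hmemPI : Fintype.card VG ∈
      {n | ∃ S₀ : Set (VG ⊕ VG × VH), S₀.ncard = n ∧ IsIPDS (weakCorona EG EH) S₀} :=
    ⟨Set.range Sum.inl, ncard_range_inl, by rw [IsIPDS, hdc]⟩
  have hmemP : Fintype.card VG ∈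
      {n | ∃ S₀ : Set (VG ⊕ VG × VH), S₀.ncard = n ∧ IsPDS (weakCorona EG EH) S₀} :=
    ⟨Set.range Sum.inl, ncard_range_inl, by rw [IsPDS, hdc]⟩
  have hmemD : Fintype.card VG ∈
      {n | ∃ D : Set (VG ⊕ VG × VH), D.ncard = n ∧ IsDomSet (weakCorona EG EH) D} := by
    refine ⟨Set.range Sum.inl, ncard_range_inl, ?_⟩
    intro w
    have := hdc ▸ Set.mem_univ w
    rw [DomClosure, Set.mem_iUnion₂] at this
    obtain ⟨d, hd, hmem⟩ := this
    exact ⟨d, hd, hmem⟩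
  refine ⟨le_antisymm (Nat.sInf_le hmemPI) (le_csInf ⟨_, hmemPI⟩ ?_),
    le_antisymm (Nat.sInf_le hmemP) (le_csInf ⟨_, hmemP⟩ ?_),
    le_antisymm (Nat.sInf_le hmemD) (le_csInf ⟨_, hmemD⟩ ?_)⟩
  · rintro n ⟨S₀, rfl, hS⟩
    exact card_le_of_hits S₀ (ipds_hits hHk hH hiso' hS)
  · rintro n ⟨S₀, rfl, hS⟩
    exact card_le_of_hits S₀ (pds_hits hHk hH hiso' hS)
  · rintro n ⟨D, rfl, hD⟩
    exact card_le_of_hits D (dom_hits hHk hH hD)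
end
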